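/- Let G be a connected graph with at least three vertices. Then the bicircular matroid B(G) is connected (2-connected as a matroid) if and only if G is not a cycle and has no pendent edge. -/

import Mathlib

open Matroid Set

namespace Bicirc

variable {α : Type*}

/-- A circuit of a matroid: a minimal dependent set. -/
def Circ (M : Matroid α) (C : Set α) : Prop :=
  M.Dep C ∧ ∀ D, D ⊂ C → M.Indep D

/-- A cocircuit: a circuit of the dual matroid. -/
def Cocirc (M : Matroid α) (C : Set α) : Prop := Circ M✶ C

/-- Deletion of a set from a matroid. -/
def Del (M : Matroid α) (X : Set α) : Matroid α := M ↾ (M.E \ X)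

/-- `e` is a loop of the matroid `M`. -/
def IsLoopE (M : Matroid α) (e : α) : Prop := Circ M {e}

/-- `e` is a coloop of the matroid `M`. -/
def IsColoopE (M : Matroid α) (e : α) : Prop := Cocirc M {e}

/-- A single element is a separator iff it is a loop or a coloop. -/
def SepElem (M : Matroid α) (e : α) : Prop := IsLoopE M e ∨ IsColoopE M e

/-- The rank of a set in a matroid (as a natural number). -/
noncomputable def rk (M : Matroid α) (X : Set α) : ℕ :=
  sSup {n | ∃ I, M.Indep I ∧ I ⊆ X ∧ n = I.ncard}

/-- The rank of a matroid. -/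
noncomputable def rkM (M : Matroid α) : ℕ := rk M M.E

/-- A matroid is connected if it is nonempty and every two distinct elements
lie in a common circuit. -/
def MConn (M : Matroid α) : Prop :=
  M.E.Nonempty ∧ ∀ e ∈ M.E, ∀ f ∈ M.E, e ≠ f → ∃ C, Circ M C ∧ e ∈ C ∧ f ∈ C

/-- `A` gives a `k`-separation `(A, M.E \ A)` of `M`. -/
def KSep (M : Matroid α) (k : ℕ) (A : Set α) : Prop :=
  A ⊆ M.E ∧ k ≤ A.ncard ∧ k ≤ (M.E \ A).ncard ∧
    rk M A + rk M (M.E \ A) < rkM M + k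

/-- A matroid is 3-connected if it has no `k`-separation for `k < 3`. -/
def ThreeConn (M : Matroid α) : Prop := ∀ k, 0 < k → k < 3 → ∀ A, ¬ KSep M k A

/-- Every pair of distinct elements of `C` lies in a common circuit of `M | C`. -/
def PairConn (M : Matroid α) (C : Set α) : Prop :=
  C ⊆ M.E ∧ ∀ e ∈ C, ∀ f ∈ C, e ≠ f → ∃ K, Circ (M ↾ C) K ∧ e ∈ K ∧ f ∈ K

/-- `C` is a connected component of the matroid `M`. -/
def IsComp (M : Matroid α) (C : Set α) : Prop :=
  C.Nonempty ∧ PairConn M C ∧ ∀ D, PairConn M D → C ⊆ D → D = C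

/-- A non-separating cocircuit: deleting it leaves a connected matroid. -/
def NonSepCocirc (M : Matroid α) (K : Set α) : Prop :=
  Cocirc M K ∧ MConn (Del M K)

/-- A cyclic flat: a flat whose restriction has no coloops. -/
def CyclicFlat (M : Matroid α) (Z : Set α) : Prop :=
  M.IsFlat Z ∧ ∀ e ∈ Z, ¬ IsColoopE (M ↾ Z) e

/-- `e` and `f` are clones: every cyclic flat contains one iff it contains the other. -/
def Clones (M : Matroid α) (e f : α) : Prop :=
  ∀ Z, CyclicFlat M Z → (e ∈ Z ↔ f ∈ Z)

/-- A clonal class: a maximal set of pairwise clone elements. -/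
def ClonalClass (M : Matroid α) (F : Set α) : Prop :=
  F ⊆ M.E ∧ (∀ e ∈ F, ∀ f ∈ F, Clones M e f) ∧
    ∀ F', F' ⊆ M.E → (∀ e ∈ F', ∀ f ∈ F', Clones M e f) → F ⊆ F' → F' = F

/-- Disjoint sets `X`, `Y` are skew: no circuit of `M` inside `X ∪ Y` meets both. -/
def Skew (M : Matroid α) (X Y : Set α) : Prop :=
  ∀ C, Circ M C → C ⊆ X ∪ Y → (C ∩ X = ∅ ∨ C ∩ Y = ∅)

/-- A good cocircuit. -/
def GoodCocirc (M : Matroid α) (K : Set α) : Prop :=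
  Cocirc M K ∧ (∃! D, IsComp (Del M K) D ∧ 1 < D.ncard) ∧
    ∀ x, IsColoopE (Del M K) x → ∀ D, IsComp (Del M K) D → 1 < D.ncard →
      ∃ F C, ClonalClass M F ∧ rk M F = 2 ∧ F ⊆ K ∧ Circ M C ∧ x ∈ C ∧
        C ∩ K ⊆ F ∧ (C ∩ K).ncard = 2 ∧ (C ∩ D).Nonempty

/-! ### Multigraphs -/

/-- A multigraph on vertex type `V` with edge type `E`: each edge has a pair of ends. -/
structure MGraph (V : Type*) (E : Type*) where
  ends : E → Sym2 V

variable {V E : Type*}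

/-- The vertices incident with at least one edge of `X`. -/
def VX (G : MGraph V E) (X : Set E) : Set V := {v | ∃ e ∈ X, v ∈ G.ends e}

/-- The set of edges incident with the vertex `v`. -/
def star (G : MGraph V E) (v : V) : Set E := {e | v ∈ G.ends e}

/-- The degree of `v` in the edge set `X` (loops count twice). -/
noncomputable def deg (G : MGraph V E) (X : Set E) (v : V) : ℕ :=
  ({e ∈ X | v ∈ G.ends e}).ncard + ({e ∈ X | G.ends e = s(v, v)}).ncard

/-- Two edges of `X` sharing a vertex. -/
def EAdj (G : MGraph V E) (X : Set E) (a b : E) : Prop :=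
  a ∈ X ∧ b ∈ X ∧ ∃ v, v ∈ G.ends a ∧ v ∈ G.ends b

/-- The subgraph `G[X]` is connected. -/
def ConnOn (G : MGraph V E) (X : Set E) : Prop :=
  ∀ a ∈ X, ∀ b ∈ X, Relation.ReflTransGen (EAdj G X) a b

/-- `C` is the edge set of a cycle of `G`. -/
def IsCycle (G : MGraph V E) (C : Set E) : Prop :=
  C.Nonempty ∧ ConnOn G C ∧ ∀ v ∈ VX G C, deg G C v = 2

/-- `X` contains no cycle. -/
def Acyclic (G : MGraph V E) (X : Set E) : Prop := ∀ C, C ⊆ X → ¬ IsCycle G C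

/-- `X` contains two distinct cycles. -/
def TwoCycles (G : MGraph V E) (X : Set E) : Prop :=
  ∃ C₁ C₂, C₁ ⊆ X ∧ C₂ ⊆ X ∧ IsCycle G C₁ ∧ IsCycle G C₂ ∧ C₁ ≠ C₂

/-- A bicycle: a minimal edge set inducing a connected subgraph with more than one cycle. -/
def IsBicycle (G : MGraph V E) (X : Set E) : Prop :=
  (ConnOn G X ∧ TwoCycles G X) ∧ ∀ Y, Y ⊂ X → ¬ (ConnOn G Y ∧ TwoCycles G Y)

/-- `P` is the edge set of a path of `G` with end-vertices `u` and `v`. -/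
def IsPathBtw (G : MGraph V E) (P : Set E) (u v : V) : Prop :=
  P.Nonempty ∧ ConnOn G P ∧ Acyclic G P ∧ u ≠ v ∧
    deg G P u = 1 ∧ deg G P v = 1 ∧ ∀ w ∈ VX G P, deg G P w ≤ 2

/-- `X` induces a theta subgraph of `G`. -/
def IsTheta (G : MGraph V E) (X : Set E) : Prop :=
  ∃ u v P₁ P₂ P₃, u ≠ v ∧
    IsPathBtw G P₁ u v ∧ IsPathBtw G P₂ u v ∧ IsPathBtw G P₃ u v ∧
    P₁ ∩ P₂ = ∅ ∧ P₁ ∩ P₃ = ∅ ∧ P₂ ∩ P₃ = ∅ ∧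
    VX G P₁ ∩ VX G P₂ = {u, v} ∧ VX G P₁ ∩ VX G P₃ = {u, v} ∧
    VX G P₂ ∩ VX G P₃ = {u, v} ∧ X = P₁ ∪ P₂ ∪ P₃

/-- `X` induces a loose handcuff of `G`. -/
def IsLooseHandcuff (G : MGraph V E) (X : Set E) : Prop :=
  ∃ C₁ C₂ P u v, IsCycle G C₁ ∧ IsCycle G C₂ ∧ VX G C₁ ∩ VX G C₂ = ∅ ∧
    IsPathBtw G P u v ∧ VX G P ∩ VX G C₁ = {u} ∧ VX G P ∩ VX G C₂ = {v} ∧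
    P ∩ C₁ = ∅ ∧ P ∩ C₂ = ∅ ∧ X = C₁ ∪ C₂ ∪ P

/-- `X` induces a tight handcuff of `G`. -/
def IsTightHandcuff (G : MGraph V E) (X : Set E) : Prop :=
  ∃ C₁ C₂ v, IsCycle G C₁ ∧ IsCycle G C₂ ∧ C₁ ∩ C₂ = ∅ ∧
    VX G C₁ ∩ VX G C₂ = {v} ∧ X = C₁ ∪ C₂

/-- Vertex adjacency via an edge. -/
def VAdj (G : MGraph V E) (u w : V) : Prop := ∃ e, u ∈ G.ends e ∧ w ∈ G.ends e

/-- The graph `G` is connected. -/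
def GConn (G : MGraph V E) : Prop := ∀ u w : V, Relation.ReflTransGen (VAdj G) u w

/-- The graph `G - x` is connected. -/
def ConnAvoid (G : MGraph V E) (x : V) : Prop :=
  ∀ u w : V, u ≠ x → w ≠ x →
    Relation.ReflTransGen
      (fun a b => a ≠ x ∧ b ≠ x ∧ ∃ e, x ∉ G.ends e ∧ a ∈ G.ends e ∧ b ∈ G.ends e) u w

/-- `G` is 2-connected: connected and with no cutvertex. -/
def TwoConnGraph (G : MGraph V E) : Prop := GConn G ∧ ∀ x, ConnAvoid G x

/-- `C` is (the edge set of) a connected component of `G[X]`. -/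
def IsGComp (G : MGraph V E) (X C : Set E) : Prop :=
  C ⊆ X ∧ C.Nonempty ∧ ConnOn G C ∧
    ∀ D, D ⊆ X → D.Nonempty → ConnOn G D → C ⊆ D → D = C

/-- The number of acyclic components of `G[X]`. -/
noncomputable def numAcyclicComps (G : MGraph V E) (X : Set E) : ℕ :=
  {C | IsGComp G X C ∧ Acyclic G C}.ncard

/-- `M` is the bicircular matroid of `G`: its circuits are precisely the bicycles. -/
def IsBicircOf (G : MGraph V E) (M : Matroid E) : Prop :=
  M.E = Set.univ ∧ ∀ C, Circ M C ↔ IsBicycle G C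

/-- The edge set `X` contains a pendent edge. -/
def PendentEdge (G : MGraph V E) (X : Set E) : Prop :=
  ∃ e ∈ X, ∃ w ∈ G.ends e, deg G X w = 1

/-- The graph `G - v` is a cycle. -/
def DelVIsCycle (G : MGraph V E) (v : V) : Prop :=
  IsCycle G {e | v ∉ G.ends e} ∧ ∀ w, w ≠ v → w ∈ VX G {e | v ∉ G.ends e}

/-! ### Matroid-labelled trees -/

/-- A matroid-labelled tree. -/
structure MTree (α : Type*) where
  ι : Type
  fin : Fintype ι
  lab : ι → Matroid α
  adj : ι → ι → Prop
  symm : ∀ i j, adj i j → adj j i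
  loopless : ∀ i, ¬ adj i i
  conn : ∀ i j, Relation.ReflTransGen adj i j
  acyc : ∀ i j, adj i j →
    ¬ Relation.ReflTransGen
        (fun a b => adj a b ∧ ¬(a = i ∧ b = j) ∧ ¬(a = j ∧ b = i)) i j
  card3 : (∃ i j : ι, i ≠ j) → ∀ i, 3 ≤ (lab i).E.ncard
  disj : ∀ i j, i ≠ j → ¬ adj i j → (lab i).E ∩ (lab j).E = ∅
  meet : ∀ i j, adj i j →
    ∃ e, (lab i).E ∩ (lab j).E = {e} ∧ ¬ SepElem (lab i) e ∧ ¬ SepElem (lab j) e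

/-- The basepoint elements of a matroid-labelled tree. -/
def MTree.bpts (T : MTree α) : Set α :=
  {e | ∃ i j, T.adj i j ∧ e ∈ (T.lab i).E ∧ e ∈ (T.lab j).E}

/-- The ground set of the matroid `M(T)`. -/
def MTree.ground (T : MTree α) : Set α := (⋃ i, (T.lab i).E) \ T.bpts

/-- The ground-set elements appearing in nodes of `S`. -/
def MTree.elems (T : MTree α) (S : Set T.ι) : Set α :=
  (⋃ i ∈ S, (T.lab i).E) ∩ T.ground

/-- `S` induces a connected subgraph of the tree. -/
def MTree.SubConn (T : MTree α) (S : Set T.ι) : Prop :=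
  ∀ i ∈ S, ∀ j ∈ S,
    Relation.ReflTransGen (fun a b => a ∈ S ∧ b ∈ S ∧ T.adj a b) i j

/-- The circuits of the matroid `M(T)`: glued along a connected subtree. -/
def MTree.IsTreeCircuit (T : MTree α) (C : Set α) : Prop :=
  ∃ (S : Set T.ι) (f : T.ι → Set α), S.Nonempty ∧ T.SubConn S ∧
    (∀ i ∈ S, Circ (T.lab i) (f i)) ∧
    (∀ i ∈ S, ∀ j, T.adj i j → ∀ e, e ∈ (T.lab i).E → e ∈ (T.lab j).E →
      (e ∈ f i ↔ j ∈ S)) ∧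
    C = (⋃ i ∈ S, f i) \ T.bpts

/-- `M = M(T)`. -/
def MTree.IsDecompOf (T : MTree α) (M : Matroid α) : Prop :=
  M.E = T.ground ∧ ∀ C, Circ M C ↔ T.IsTreeCircuit C

/-- A node whose matroid is a circuit. -/
def MTree.CircNode (T : MTree α) (i : T.ι) : Prop := Circ (T.lab i) (T.lab i).E

/-- A node whose matroid is a cocircuit. -/
def MTree.CocircNode (T : MTree α) (i : T.ι) : Prop := Cocirc (T.lab i) (T.lab i).E

/-- `T` is the canonical (Cunningham–Edmonds) decomposition tree of `M`. -/
def MTree.IsCanonical (T : MTree α) (M : Matroid α) : Prop :=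
  T.IsDecompOf M ∧
    (∀ i, ThreeConn (T.lab i) ∨ T.CircNode i ∨ T.CocircNode i) ∧
    ∀ i j, T.adj i j →
      ¬(T.CircNode i ∧ T.CircNode j) ∧ ¬(T.CocircNode i ∧ T.CocircNode j)

/-- The component of `T` minus the edge `{i, j}` containing `i`. -/
def MTree.side (T : MTree α) (i j : T.ι) : Set T.ι :=
  {k | Relation.ReflTransGen
        (fun a b => T.adj a b ∧ ¬(a = i ∧ b = j) ∧ ¬(a = j ∧ b = i)) i k}

/-- `(A, B)` is displayed by an edge of `T`. -/
def MTree.DispEdge (T : MTree α) (A B : Set α) : Prop :=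
  ∃ i j, T.adj i j ∧ A = T.elems (T.side i j) ∧ B = T.elems (T.side j i)

/-- The component of `T - n` containing `k`. -/
def MTree.compAvoid (T : MTree α) (n k : T.ι) : Set T.ι :=
  {k' | Relation.ReflTransGen (fun a b => T.adj a b ∧ a ≠ n ∧ b ≠ n) k k'}

/-- `(A, B)` is displayed by the node `n` of `T`. -/
def MTree.DispNode (T : MTree α) (n : T.ι) (A B : Set α) : Prop :=
  A ∪ B = T.ground ∧ A ∩ B = ∅ ∧
    ∀ k, k ≠ n →
      (T.elems (T.compAvoid n k) ⊆ A ∨ T.elems (T.compAvoid n k) ⊆ B)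

/-- `(A, B)` is a 2-separation of `M`. -/
def TwoSep (M : Matroid α) (A B : Set α) : Prop :=
  A ∪ B = M.E ∧ A ∩ B = ∅ ∧ 2 ≤ A.ncard ∧ 2 ≤ B.ncard ∧
    rk M A + rk M B ≤ rkM M + 1

/-- `X` is 2-separating in `M`. -/
def SepSet2 (M : Matroid α) (X : Set α) : Prop :=
  rk M X + rk M (M.E \ X) ≤ rkM M + 1

/-- A wedge relative to `A`: a maximal 2-separating nonempty proper subset of `M.E \ A`. -/
def Wedge (M : Matroid α) (A X : Set α) : Prop :=
  X ⊆ M.E \ A ∧ X.Nonempty ∧ X ≠ M.E \ A ∧ SepSet2 M X ∧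
    ∀ Y, Y ⊆ M.E \ A → Y.Nonempty → Y ≠ M.E \ A → SepSet2 M Y → X ⊆ Y → Y = X

/-- The rooted matroid `(N, L)` is bicircular: `N = B(H)` for some finite multigraph `H`
in which every element of `L` is a loop. -/
def RootedBicirc (N : Matroid α) (L : Set α) : Prop :=
  ∃ (V : Type) (_ : Fintype V) (_ : N.E.Finite) (G : MGraph V ↥N.E),
    (∀ D, Circ N D ↔ ∃ C : Set ↥N.E, IsBicycle G C ∧ D = Subtype.val '' C) ∧
    ∀ l : ↥N.E, l.1 ∈ L → (G.ends l).IsDiag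

end Bicirc

/-!
Necessity: a bicycle contains two distinct cycles, so there is none if `G` is a cycle, and none
contains an edge at a vertex of degree one.

Sufficiency: by strong circuit elimination, lying on a common circuit is transitive, so it
suffices that every split `(A, Aᶜ)` of the edges is crossed by a bicycle. If none is, each side
`S` contains a pseudoforest (an independent set of `B(G)`) with `|V(S)| - a(S)` edges, `a(S)`
the number of acyclic components of `G[S]`, and as no bicycle crosses, their union is again a
pseudoforest, so `|V(A) ∩ V(Aᶜ)| ≤ a(A) + a(Aᶜ)`. As `G` is connected with minimum degree
two, every component of `G[S]` meets `V(Sᶜ)`, and an acyclic one meets it in at least two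
leaves. Hence all components on both sides are trees, and `G` has at most `|V|` edges, whereas
minimum degree two and `G` not being a cycle give at least `|V| + 1`.
-/

namespace Matroid

variable {α : Type*} {M : Matroid α} {C C₁ D : Set α} {e g : α}

/-- Sharing a circuit is transitive: strong circuit elimination, by induction on `|D \ C₁|`. -/
lemma IsCircuit.exists_isCircuit_mem_mem [Finite α] (hC₁ : M.IsCircuit C₁) (he : e ∈ C₁)
    (hD : M.IsCircuit D) (hg : g ∈ D) (hDC₁ : (D ∩ C₁).Nonempty) :
    ∃ C, M.IsCircuit C ∧ e ∈ C ∧ g ∈ C := by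
  induction hn : (D \ C₁).ncard using Nat.strong_induction_on generalizing D with
  | _ n ih =>
  by_cases heD : e ∈ D
  · exact ⟨D, hD, heD, hg⟩
  obtain ⟨x, hxD, hxC₁⟩ := hDC₁
  obtain ⟨C₃, hC₃sub, hC₃, he₃⟩ := hC₁.strong_elimination hD hxC₁ hxD he heD
  by_cases hg₃ : g ∈ C₃
  · exact ⟨C₃, hC₃, he₃, hg₃⟩
  obtain ⟨y, hy₃, hyC₁⟩ : ∃ y ∈ C₃, y ∉ C₁ := by
    by_contra! h
    exact (hC₃sub (hC₃.eq_of_subset_isCircuit hC₁ h ▸ hxC₁)).2 rfl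
  have hyD : y ∈ D := ((hC₃sub hy₃).1).resolve_left hyC₁
  obtain ⟨C₄, hC₄sub, hC₄, hg₄⟩ := hD.strong_elimination hC₃ hyD hy₃ hg hg₃
  have hC₄D : C₄ \ C₁ ⊆ (D \ C₁) \ {y} := by
    rintro a ⟨ha₄, haC₁⟩
    refine ⟨⟨?_, haC₁⟩, (hC₄sub ha₄).2⟩
    rcases (hC₄sub ha₄).1 with h | h
    · exact h
    · exact ((hC₃sub h).1).resolve_left haC₁
  by_cases hmeet : (C₄ ∩ C₁).Nonempty
  · refine ih _ ?_ hC₄ hg₄ hmeet rfl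
    rw [← hn]
    exact Set.ncard_lt_ncard ((hC₄D.trans Set.sdiff_subset).ssubset_of_ne fun h =>
      (hC₄D (h ▸ ⟨hyD, hyC₁⟩)).2 rfl) (Set.toFinite _)
  · have hC₄D' : C₄ ⊆ D := fun a ha =>
      (hC₄D ⟨ha, fun haC₁ => hmeet ⟨a, ha, haC₁⟩⟩).1.1
    exact absurd (hC₄.eq_of_subset_isCircuit hD hC₄D' ▸ hyD) (hC₄sub · |>.2 rfl)

def connComp (M : Matroid α) (e : α) : Set α :=
  insert e {x | ∃ C, M.IsCircuit C ∧ e ∈ C ∧ x ∈ C}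

lemma IsCircuit.subset_connComp_or_disjoint [Finite α] (hC : M.IsCircuit C) :
    C ⊆ connComp M e ∨ Disjoint C (connComp M e) := by
  refine (Set.disjoint_or_nonempty_inter C (connComp M e)).symm.imp
    (fun ⟨x, hxC, hx⟩ y hy => ?_) id
  rcases hx with rfl | ⟨C', hC', heC', hxC'⟩
  · exact Or.inr ⟨C, hC, hxC, hy⟩
  · exact Or.inr (hC'.exists_isCircuit_mem_mem heC' hC hy ⟨x, hxC, hxC'⟩)

lemma exists_isCircuit_mem_mem_of_forall_crossing [Finite α]
    (hcross : ∀ A, A.Nonempty → (M.E \ A).Nonempty →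
      ∃ C, M.IsCircuit C ∧ (C ∩ A).Nonempty ∧ (C \ A).Nonempty)
    (hg : g ∈ M.E) (heg : e ≠ g) : ∃ C, M.IsCircuit C ∧ e ∈ C ∧ g ∈ C := by
  by_cases hgA : g ∈ connComp M e
  · exact hgA.resolve_left heg.symm
  obtain ⟨C, hC, ⟨x, hxC, hxA⟩, ⟨y, hyC, hyA⟩⟩ :=
    hcross (connComp M e) (Set.insert_nonempty _ _) ⟨g, hg, hgA⟩
  exact (hC.subset_connComp_or_disjoint.resolve_left fun h => hyA (h hyC)).notMem_of_mem_left
    hxC hxA |>.elim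

end Matroid

namespace Bicirc

lemma circ_iff_isCircuit {α : Type*} {M : Matroid α} {C : Set α} :
    Circ M C ↔ M.IsCircuit C := by
  rw [Matroid.isCircuit_iff_forall_ssubset]
  exact Iff.rfl

section Graph

variable {V E : Type*} {G : MGraph V E} {A C D K S X Y Z : Set E} {e f g p : E} {u v w x : V}

lemma exists_mem_ends (G : MGraph V E) (e : E) : ∃ v, v ∈ G.ends e :=
  ⟨_, Sym2.out_fst_mem _⟩

lemma exists_ends_eq (G : MGraph V E) (e : E) : ∃ u w, G.ends e = s(u, w) :=
  ⟨_, _, (Quot.out_eq _).symm⟩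

lemma VX_mono (h : X ⊆ Y) : VX G X ⊆ VX G Y :=
  fun _ ⟨e, he, hv⟩ => ⟨e, h he, hv⟩

@[simp] lemma VX_empty : VX G ∅ = ∅ := by
  simp [VX]

lemma VX_union : VX G (X ∪ Y) = VX G X ∪ VX G Y := by
  ext v
  simp only [VX, Set.mem_union, Set.mem_ofPred_eq]
  grind

lemma VX_singleton (h : G.ends e = s(u, w)) : VX G {e} = {u, w} := by
  ext x
  simp [VX, h]

lemma VX_nonempty (h : X.Nonempty) : (VX G X).Nonempty :=
  let ⟨e, he⟩ := h
  let ⟨v, hv⟩ := exists_mem_ends G e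
  ⟨v, e, he, hv⟩

lemma VX_insert_subset (he : G.ends e = s(u, w)) :
    VX G (insert e X) ⊆ insert w (insert u (VX G X)) := by
  rintro x ⟨f, rfl | hf, hx⟩
  · rw [he, Sym2.mem_iff] at hx
    rcases hx with rfl | rfl <;> simp
  · exact Or.inr (Or.inr ⟨f, hf, hx⟩)

lemma disjoint_of_disjoint_VX (h : Disjoint (VX G X) (VX G Y)) : Disjoint X Y :=
  Set.disjoint_left.mpr fun e hX hY =>
    Set.disjoint_left.mp h ⟨e, hX, Sym2.out_fst_mem _⟩ ⟨e, hY, Sym2.out_fst_mem _⟩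

lemma VX_insert_union_subset (hvw : v ≠ w) (hvg : v ∈ G.ends g) (hwg : w ∈ G.ends g)
    (hv : v ∈ VX G X) (hw : w ∈ VX G Y) : VX G (insert g X ∪ Y) ⊆ VX G X ∪ VX G Y := by
  rw [VX_union, Set.insert_eq, VX_union,
    VX_singleton ((Sym2.mem_and_mem_iff hvw).mp ⟨hvg, hwg⟩)]
  rintro x (((rfl | rfl) | hx) | hx)
  exacts [Or.inl hv, Or.inr hw, Or.inl hx, Or.inr hx]

lemma ncard_VX_insert_le [Finite V] (hu : u ∈ VX G X) (hue : u ∈ G.ends e) :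
    (VX G (insert e X)).ncard ≤ (VX G X).ncard + 1 := by
  obtain ⟨w, he⟩ := Sym2.mem_iff_exists.mp hue
  calc (VX G (insert e X)).ncard ≤ (insert w (VX G X)).ncard :=
        Set.ncard_le_ncard (Set.insert_eq_of_mem hu ▸ VX_insert_subset he)
    _ ≤ (VX G X).ncard + 1 := Set.ncard_insert_le _ _

open Classical in
lemma sum_ite_mem_VX [Fintype V] (X : Set E) :
    ∑ v, (if v ∈ VX G X then 1 else 0) = (VX G X).ncard := by
  rw [Finset.sum_boole, Set.ncard_eq_toFinset_card']
  simp [Set.toFinset]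

open Classical in
lemma deg_singleton : deg G {e} v =
    (if v ∈ G.ends e then 1 else 0) + if G.ends e = s(v, v) then 1 else 0 := by
  have key (p : E → Prop) : ({f ∈ ({e} : Set E) | p f}).ncard = if p e then 1 else 0 := by
    have : {f ∈ ({e} : Set E) | p f} = if p e then {e} else ∅ := by
      ext f
      split_ifs <;> aesop
    rw [this]
    split_ifs <;> simp
  rw [deg, key, key]
  congr

section Degree

variable [Finite E]

lemma deg_mono (h : X ⊆ Y) : deg G X v ≤ deg G Y v :=
  add_le_add (Set.ncard_le_ncard fun _ he => ⟨h he.1, he.2⟩)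
    (Set.ncard_le_ncard fun _ he => ⟨h he.1, he.2⟩)

lemma one_le_deg_iff : 1 ≤ deg G X v ↔ v ∈ VX G X := by
  simp only [deg, Nat.one_le_iff_ne_zero, ne_eq, Nat.add_eq_zero_iff, not_and_or,
    Set.ncard_eq_zero (Set.toFinite _), ← Set.nonempty_iff_ne_empty]
  constructor
  · rintro (⟨e, he, hv⟩ | ⟨e, he, hv⟩)
    · exact ⟨e, he, hv⟩
    · exact ⟨e, he, by simp [hv]⟩
  · rintro ⟨e, he, hv⟩
    exact Or.inl ⟨e, he, hv⟩

lemma deg_eq_zero (h : v ∉ VX G X) : deg G X v = 0 := by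
  by_contra hne
  exact h (one_le_deg_iff.mp (by omega))

lemma deg_union (h : Disjoint X Y) : deg G (X ∪ Y) v = deg G X v + deg G Y v := by
  have hsplit (p : E → Prop) : {e ∈ X ∪ Y | p e} = {e ∈ X | p e} ∪ {e ∈ Y | p e} := by
    ext; simp only [Set.mem_union, Set.mem_ofPred_eq]; tauto
  have hdisj (p : E → Prop) : Disjoint {e ∈ X | p e} {e ∈ Y | p e} :=
    h.mono (Set.sep_subset _ _) (Set.sep_subset _ _)
  simp only [deg, hsplit, Set.ncard_union_eq (hdisj _)]
  ring

lemma exists_unique_of_deg_eq_one (h : deg G X v = 1) :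
    ∃ e ∈ X, v ∈ G.ends e ∧ G.ends e ≠ s(v, v) ∧
      ∀ f ∈ X, v ∈ G.ends f → f = e := by
  have hle : ({f ∈ X | G.ends f = s(v, v)}).ncard ≤ ({f ∈ X | v ∈ G.ends f}).ncard :=
    Set.ncard_le_ncard fun f hf => ⟨hf.1, by simp [hf.2]⟩
  rw [deg] at h
  obtain ⟨e, he⟩ := Set.ncard_eq_one.mp (show ({f ∈ X | v ∈ G.ends f}).ncard = 1 by omega)
  have hloops : {f ∈ X | G.ends f = s(v, v)} = ∅ :=
    (Set.ncard_eq_zero (Set.toFinite _)).mp (by omega)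
  have heX : e ∈ {f ∈ X | v ∈ G.ends f} := he ▸ rfl
  refine ⟨e, heX.1, heX.2, fun hloop => ?_, fun f hf hvf => ?_⟩
  · exact (hloops ▸ ⟨heX.1, hloop⟩ : e ∈ (∅ : Set E))
  · exact (he ▸ ⟨hf, hvf⟩ : f ∈ ({e} : Set E))

lemma mem_VX_compl_of_deg_eq_one (hdeg : ∀ v, 2 ≤ deg G Set.univ v) (h : deg G S v = 1) :
    v ∈ VX G Sᶜ := by
  have := hdeg v
  rw [← Set.union_compl_self S, deg_union disjoint_compl_right] at this
  exact one_le_deg_iff.mp (by omega)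

open Classical in
lemma sum_ends_indicator [Fintype V] (p : Sym2 V) :
    ∑ v, ((if v ∈ p then 1 else 0) + if p = s(v, v) then 1 else 0) = 2 := by
  induction p using Sym2.ind with
  | _ a b =>
  rw [Finset.sum_add_distrib, Finset.sum_boole, Finset.sum_boole]
  have h1 : (Finset.univ.filter fun v => v ∈ s(a, b)) = {a, b} := by ext; simp
  have h2 : (Finset.univ.filter fun v => s(a, b) = s(v, v)) = if a = b then {a} else ∅ := by
    ext v
    split_ifs with h
    · simp [h, eq_comm]
    · simp only [Finset.mem_filter, Finset.mem_univ, true_and, Sym2.eq_iff]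
      grind
  rw [h1, h2]
  by_cases hab : a = b
  · simp [hab]
  · simp [hab, Finset.card_pair hab]

lemma sum_deg [Fintype V] (X : Set E) : ∑ v, deg G X v = 2 * X.ncard := by
  induction X, X.toFinite using Set.Finite.induction_on with
  | empty => simp [deg_eq_zero]
  | @insert e X he _ ih =>
    have hsplit v : deg G (insert e X) v = deg G {e} v + deg G X v := by
      rw [Set.insert_eq, deg_union (Set.disjoint_singleton_left.mpr he)]
    rw [Finset.sum_congr rfl fun v _ => hsplit v, Finset.sum_add_distrib, ih,
      Set.ncard_insert_of_notMem he]
    simp only [deg_singleton]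
    rw [sum_ends_indicator]
    ring

end Degree

lemma EAdj.symm (h : EAdj G X e f) : EAdj G X f e :=
  ⟨h.2.1, h.1, h.2.2.imp fun _ hv => hv.symm⟩

lemma EAdj.mono (h : X ⊆ Y) (hef : EAdj G X e f) : EAdj G Y e f :=
  ⟨h hef.1, h hef.2.1, hef.2.2⟩

lemma reflTransGen_eAdj_symm (h : Relation.ReflTransGen (EAdj G X) e f) :
    Relation.ReflTransGen (EAdj G X) f e :=
  haveI : Std.Symm (EAdj G X) := ⟨fun _ _ => EAdj.symm⟩
  Std.Symm.symm _ _ h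

lemma reflTransGen_eAdj_mono (h : X ⊆ Y) (hef : Relation.ReflTransGen (EAdj G X) e f) :
    Relation.ReflTransGen (EAdj G Y) e f :=
  Relation.ReflTransGen.mono (fun _ _ => EAdj.mono h) _ _ hef

lemma connOn_singleton : ConnOn G {e} := by
  rintro a rfl b rfl
  rfl

lemma ConnOn.union (hX : ConnOn G X) (hY : ConnOn G Y) (hvX : v ∈ VX G X) (hvY : v ∈ VX G Y) :
    ConnOn G (X ∪ Y) := by
  obtain ⟨x, hx, hvx⟩ := hvX
  obtain ⟨y, hy, hvy⟩ := hvY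
  have cross : ∀ a ∈ X, ∀ b ∈ Y, Relation.ReflTransGen (EAdj G (X ∪ Y)) a b :=
    fun a ha b hb =>
      ((reflTransGen_eAdj_mono Set.subset_union_left (hX a ha x hx)).tail
        ⟨Or.inl hx, Or.inr hy, v, hvx, hvy⟩).trans
        (reflTransGen_eAdj_mono Set.subset_union_right (hY y hy b hb))
  rintro a (ha | ha) b (hb | hb)
  · exact reflTransGen_eAdj_mono Set.subset_union_left (hX a ha b hb)
  · exact cross a ha b hb
  · exact reflTransGen_eAdj_symm (cross b hb a ha)
  · exact reflTransGen_eAdj_mono Set.subset_union_right (hY a ha b hb)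

lemma ConnOn.insert_edge (hX : ConnOn G X) (hvX : v ∈ VX G X) (hve : v ∈ G.ends e) :
    ConnOn G (insert e X) := by
  rw [Set.insert_eq, Set.union_comm]
  exact hX.union connOn_singleton hvX ⟨e, rfl, hve⟩

lemma ConnOn.exists_edge_at_boundary (hX : ConnOn G X) (hYX : Y ⊂ X) (hY : Y.Nonempty) :
    ∃ g ∈ X \ Y, ∃ v ∈ VX G Y, v ∈ G.ends g := by
  obtain ⟨y, hy⟩ := hY
  obtain ⟨x, hxX, hxY⟩ := Set.exists_of_ssubset hYX
  by_contra! hno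
  have closed : ∀ b, Relation.ReflTransGen (EAdj G X) y b → b ∈ Y := by
    intro b hb
    induction hb with
    | refl => exact hy
    | tail _ hbc ih =>
      obtain ⟨-, hcX, v, hvb, hvc⟩ := hbc
      by_contra hcY
      exact hno _ ⟨hcX, hcY⟩ v ⟨_, ih, hvb⟩ hvc
  exact hxY (closed x (hX y (hYX.subset hy) x hxX))

lemma ConnOn.sdiff_singleton_of_linked (hX : ConnOn G X)
    (H : ∀ c ∈ X \ {g}, ∀ d ∈ X \ {g}, (∃ v ∈ G.ends c, v ∈ G.ends g) →
      (∃ v ∈ G.ends d, v ∈ G.ends g) → Relation.ReflTransGen (EAdj G (X \ {g})) c d) :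
    ConnOn G (X \ {g}) := by
  intro a ha b hb
  have key : ∀ b', Relation.ReflTransGen (EAdj G X) a b' →
      (b' ≠ g → Relation.ReflTransGen (EAdj G (X \ {g})) a b') ∧
      (b' = g → ∃ c ∈ X \ {g}, (∃ v ∈ G.ends c, v ∈ G.ends g) ∧
        Relation.ReflTransGen (EAdj G (X \ {g})) a c) := by
    intro b' hb'
    induction hb' with
    | refl => exact ⟨fun _ => .refl, fun hag => absurd hag ha.2⟩
    | @tail c d _ hcd ih =>
      obtain ⟨hcX, hdX, v, hvc, hvd⟩ := hcd
      by_cases hcg : c = g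
      · subst hcg
        obtain ⟨h, hh, hhg, hah⟩ := ih.2 rfl
        exact ⟨fun hdg => hah.trans (H h hh d ⟨hdX, hdg⟩ hhg ⟨v, hvd, hvc⟩),
          fun _ => ⟨h, hh, hhg, hah⟩⟩
      · exact ⟨fun hdg => (ih.1 hcg).tail ⟨⟨hcX, hcg⟩, ⟨hdX, hdg⟩, v, hvc, hvd⟩,
          fun hdg => ⟨c, ⟨hcX, hcg⟩, ⟨v, hvc, hdg ▸ hvd⟩, ih.1 hcg⟩⟩
  exact (key b (hX a ha.1 b hb.1)).1 hb.2

lemma ConnOn.sdiff_singleton_of_leaf (hX : ConnOn G X) (hwp : w ∈ G.ends p)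
    (hleaf : ∀ f ∈ X, w ∈ G.ends f → f = p) : ConnOn G (X \ {p}) := by
  obtain ⟨x, hpx⟩ := Sym2.mem_iff_exists.mp hwp
  have hend : ∀ c ∈ X \ {p}, ∀ v ∈ G.ends c, v ∈ G.ends p → v = x := by
    intro c hc v hvc hvp
    rw [hpx, Sym2.mem_iff] at hvp
    exact hvp.resolve_left fun h => hc.2 (hleaf c hc.1 (h ▸ hvc))
  exact hX.sdiff_singleton_of_linked fun c hc d hd ⟨vc, hvc, hvcp⟩ ⟨vd, hvd, hvdp⟩ =>
    .single ⟨hc, hd, x, hend c hc vc hvc hvcp ▸ hvc, hend d hd vd hvd hvdp ▸ hvd⟩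

lemma ConnOn.subset_or_subset {P Q : Set E} (hX : ConnOn G X) (hXPQ : X ⊆ P ∪ Q)
    (hPQ : Disjoint (VX G P) (VX G Q)) : X ⊆ P ∨ X ⊆ Q := by
  rcases X.eq_empty_or_nonempty with rfl | ⟨x₀, hx₀⟩
  · exact Or.inl (Set.empty_subset P)
  have stay : ∀ {R S : Set E}, Disjoint (VX G R) (VX G S) → X ⊆ R ∪ S → x₀ ∈ R →
      X ⊆ R := by
    intro R S hRS hXRS hx₀R x hx
    induction hX x₀ hx₀ x hx with
    | refl => exact hx₀R
    | @tail b c _ hbc ih =>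
      obtain ⟨hbX, hcX, v, hvb, hvc⟩ := hbc
      exact (hXRS hcX).resolve_right fun hcS =>
        Set.disjoint_left.mp hRS ⟨b, ih hbX, hvb⟩ ⟨c, hcS, hvc⟩
  rcases hXPQ hx₀ with h | h
  · exact Or.inl (stay hPQ hXPQ h)
  · exact Or.inr (stay hPQ.symm (Set.union_comm P Q ▸ hXPQ) h)

/-- The independent sets of the bicircular matroid. -/
def IsPseudoforest (G : MGraph V E) (I : Set E) : Prop :=
  ∀ W ⊆ I, ConnOn G W → ¬ TwoCycles G W

lemma IsPseudoforest.union {I J : Set E} (hI : IsPseudoforest G I) (hJ : IsPseudoforest G J)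
    (hIJ : Disjoint (VX G I) (VX G J)) : IsPseudoforest G (I ∪ J) := fun W hW hWc =>
  (hWc.subset_or_subset hW hIJ).elim (hI W · hWc) (hJ W · hWc)

lemma Acyclic.isPseudoforest (hX : Acyclic G X) : IsPseudoforest G X :=
  fun _ hW _ ⟨C, _, hC, _, hCc, _⟩ => hX C (hC.trans hW) hCc

/-- Empty if `e ∉ A`. -/
def component (G : MGraph V E) (A : Set E) (e : E) : Set E :=
  {f | f ∈ A ∧ Relation.ReflTransGen (EAdj G A) e f}

def components (G : MGraph V E) (A : Set E) : Set (Set E) := component G A '' A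

lemma component_subset : component G A e ⊆ A := fun _ h => h.1

lemma mem_component_self (he : e ∈ A) : e ∈ component G A e := ⟨he, .refl⟩

lemma component_nonempty (he : e ∈ A) : (component G A e).Nonempty :=
  ⟨e, mem_component_self he⟩

lemma mem_component_of_eAdj (hf : f ∈ component G A e) (hfg : EAdj G A f g) :
    g ∈ component G A e :=
  ⟨hfg.2.1, hf.2.tail hfg⟩

lemma mem_component_of_mem_VX (hf : f ∈ component G A e) (hg : g ∈ A) (hv : v ∈ G.ends f)
    (hvg : v ∈ G.ends g) : g ∈ component G A e :=
  mem_component_of_eAdj hf ⟨hf.1, hg, v, hv, hvg⟩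

lemma connOn_component : ConnOn G (component G A e) := by
  have root : ∀ f, Relation.ReflTransGen (EAdj G A) e f →
      Relation.ReflTransGen (EAdj G (component G A e)) e f := by
    intro f hf
    induction hf with
    | refl => rfl
    | @tail b c hb hbc ih =>
      exact ih.tail ⟨⟨hbc.1, hb⟩, mem_component_of_eAdj ⟨hbc.1, hb⟩ hbc, hbc.2.2⟩
  intro a ha b hb
  exact (reflTransGen_eAdj_symm (root a ha.2)).trans (root b hb.2)

lemma component_eq_of_mem (hf : f ∈ component G A e) : component G A f = component G A e := by
  ext x
  exact ⟨fun hx => ⟨hx.1, hf.2.trans hx.2⟩,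
    fun hx => ⟨hx.1, (reflTransGen_eAdj_symm hf.2).trans hx.2⟩⟩

lemma component_eq_of_mem_VX (hv : v ∈ VX G (component G A e))
    (hv' : v ∈ VX G (component G A f)) :
    component G A e = component G A f := by
  obtain ⟨p, hp, hvp⟩ := hv
  obtain ⟨q, hq, hvq⟩ := hv'
  rw [← component_eq_of_mem (mem_component_of_mem_VX hp hq.1 hvp hvq), component_eq_of_mem hq]

lemma deg_component [Finite E] (hv : v ∈ VX G (component G A e)) :
    deg G (component G A e) v = deg G A v := by
  obtain ⟨k, hk, hvk⟩ := hv
  have hsame (p : E → Prop) (hp : ∀ f, p f → v ∈ G.ends f) :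
      {f ∈ component G A e | p f} = {f ∈ A | p f} := by
    ext f
    exact ⟨fun hf => ⟨hf.1.1, hf.2⟩,
      fun hf => ⟨mem_component_of_mem_VX hk hf.1 hvk (hp f hf.2), hf.2⟩⟩
  rw [deg, deg, hsame _ fun _ h => h, hsame _ fun _ h => by simp [h]]

lemma VX_component_disjoint :
    Disjoint (VX G (component G A e)) (VX G (A \ component G A e)) := by
  rw [Set.disjoint_left]
  rintro v ⟨p, hp, hvp⟩ ⟨q, hq, hvq⟩
  exact hq.2 (mem_component_of_mem_VX hp hq.1 hvp hvq)

lemma component_sdiff_component (hf : f ∈ A \ component G A e) :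
    component G (A \ component G A e) f = component G A f := by
  refine Set.Subset.antisymm
    (fun z hz => ⟨hz.1.1, reflTransGen_eAdj_mono Set.sdiff_subset hz.2⟩) ?_
  rintro z ⟨-, hz⟩
  induction hz with
  | refl => exact mem_component_self hf
  | @tail b c _ hbc ih =>
    refine mem_component_of_eAdj ih ⟨ih.1, ⟨hbc.2.1, fun hc => ih.1.2 ?_⟩, hbc.2.2⟩
    exact mem_component_of_eAdj hc hbc.symm

lemma components_sdiff_component :
    components G (A \ component G A e) = components G A \ {component G A e} := by
  ext K
  constructor
  · rintro ⟨f, hf, rfl⟩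
    rw [component_sdiff_component hf]
    exact ⟨⟨f, hf.1, rfl⟩, fun h => hf.2 (h ▸ mem_component_self hf.1)⟩
  · rintro ⟨⟨f, hf, rfl⟩, hne⟩
    have hf' : f ∈ A \ component G A e := ⟨hf, fun h => hne (component_eq_of_mem h)⟩
    exact ⟨f, hf', component_sdiff_component hf'⟩

lemma ncard_VX_sdiff_component_add [Finite V] (A : Set E) (e : E) :
    (VX G (A \ component G A e)).ncard + (VX G (component G A e)).ncard = (VX G A).ncard := by
  rw [← Set.ncard_union_eq VX_component_disjoint.symm, ← VX_union,
    Set.sdiff_union_of_subset component_subset]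

lemma GConn.connOn_univ (hG : GConn G) : ConnOn G Set.univ := by
  intro a _ b _
  obtain ⟨u, hu⟩ := exists_mem_ends G a
  obtain ⟨w, hw⟩ := exists_mem_ends G b
  have reach : ∀ y, Relation.ReflTransGen (VAdj G) u y →
      ∀ h, y ∈ G.ends h → Relation.ReflTransGen (EAdj G Set.univ) a h := by
    intro y hy
    induction hy with
    | refl => exact fun h hyh => .single ⟨trivial, trivial, u, hu, hyh⟩
    | @tail y' y'' _ hstep ih =>
      obtain ⟨k, hy', hy''⟩ := hstep
      exact fun h hyh => (ih k hy').tail ⟨trivial, trivial, y'', hy'', hyh⟩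
  exact reach w (hG u w) b hw

lemma GConn.VX_component_inter_nonempty (hG : GConn G) (he : e ∈ S) (hS : Sᶜ.Nonempty) :
    (VX G (component G S e) ∩ VX G Sᶜ).Nonempty := by
  obtain ⟨u, hu⟩ := exists_mem_ends G e
  obtain ⟨b, hb⟩ := hS
  obtain ⟨z, hz⟩ := exists_mem_ends G b
  have reach : ∀ y, Relation.ReflTransGen (VAdj G) u y →
      y ∈ VX G (component G S e) ∨ (VX G (component G S e) ∩ VX G Sᶜ).Nonempty := by
    intro y hy
    induction hy with
    | refl => exact Or.inl ⟨e, mem_component_self he, hu⟩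
    | @tail y' y'' _ hstep ih =>
      obtain ⟨h, hy', hy''⟩ := hstep
      refine ih.elim (fun ⟨k, hk, hyk⟩ => ?_) Or.inr
      by_cases hh : h ∈ S
      · exact Or.inl ⟨h, mem_component_of_mem_VX hk hh hyk hy', hy''⟩
      · exact Or.inr ⟨y', ⟨k, hk, hyk⟩, h, hh, hy'⟩
  exact (reach z (hG u z)).elim (fun hzK => ⟨z, hzK, b, hb, hz⟩) id

section Cycles

open Classical

lemma deg_singleton_of_ends (h : G.ends e = s(u, w)) :
    deg G {e} v = (if v = u ∨ v = w then 1 else 0) + if u = v ∧ w = v then 1 else 0 := by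
  simp only [deg_singleton, h, Sym2.mem_iff, Sym2.eq_iff, or_self]

lemma isCycle_singleton (h : G.ends e = s(u, u)) : IsCycle G {e} := by
  refine ⟨⟨e, rfl⟩, connOn_singleton, fun v hv => ?_⟩
  rw [VX_singleton h, Set.pair_eq_singleton, Set.mem_singleton_iff] at hv
  simp [deg_singleton_of_ends h, hv]

lemma IsCycle.exists_loop_of_singleton (hC : IsCycle G {g}) : ∃ u, G.ends g = s(u, u) := by
  obtain ⟨u, w, huw⟩ := exists_ends_eq G g
  refine ⟨u, huw.trans (congrArg _ ?_)⟩
  by_contra hne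
  have := hC.2.2 u ⟨g, rfl, by simp [huw]⟩
  rw [deg_singleton_of_ends huw] at this
  simp [hne, Ne.symm hne] at this

variable [Finite E]

lemma isCycle_pair (he : G.ends e = s(u, w)) (hf : G.ends f = s(u, w)) (huw : u ≠ w)
    (hef : e ≠ f) : IsCycle G {e, f} := by
  have hu : u ∈ VX G {e} := ⟨e, rfl, by simp [he]⟩
  refine ⟨⟨e, Or.inl rfl⟩, ?_, fun v hv => ?_⟩
  · rw [Set.pair_comm]
    exact connOn_singleton.insert_edge hu (by simp [hf])
  · have hv' : v = u ∨ v = w := by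
      rw [Set.insert_eq, VX_union, VX_singleton he, VX_singleton hf, Set.union_self] at hv
      exact hv
    rw [Set.insert_eq, deg_union (Set.disjoint_singleton.mpr hef), deg_singleton_of_ends he,
      deg_singleton_of_ends hf]
    have : ¬ (u = v ∧ w = v) := fun h => huw (h.1.trans h.2.symm)
    simp [hv', this]

lemma IsCycle.eq_of_subset (hC : IsCycle G C) (hD : IsCycle G D) (hDC : D ⊆ C) : D = C := by
  by_contra hne
  obtain ⟨g, hg, v, hvD, hvg⟩ := hC.2.1.exists_edge_at_boundary (hDC.ssubset_of_ne hne) hD.1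
  have hle : deg G (D ∪ {g}) v ≤ deg G C v :=
    deg_mono (Set.union_subset hDC (Set.singleton_subset_iff.mpr hg.1))
  rw [deg_union (Set.disjoint_singleton_right.mpr hg.2), hD.2.2 v hvD,
    hC.2.2 v (VX_mono hDC hvD)] at hle
  have := one_le_deg_iff.mpr (show v ∈ VX G {g} from ⟨g, rfl, hvg⟩)
  omega

lemma IsCycle.ncard_VX [Fintype V] (hC : IsCycle G C) : (VX G C).ncard = C.ncard := by
  have hdeg v : deg G C v = 2 * if v ∈ VX G C then 1 else 0 := by
    split_ifs with hv
    · exact hC.2.2 v hv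
    · exact deg_eq_zero hv
  have := sum_deg (G := G) C
  simp only [hdeg, ← Finset.mul_sum, sum_ite_mem_VX] at this
  omega

lemma IsCycle.mem_VX_sdiff_singleton (hC : IsCycle G C) (hg : g ∈ C) (hCg : C ≠ {g})
    (hv : v ∈ G.ends g) : v ∈ VX G (C \ {g}) := by
  obtain ⟨w, hw⟩ := Sym2.mem_iff_exists.mp hv
  have hvw : v ≠ w := by
    rintro rfl
    exact hCg (hC.eq_of_subset (isCycle_singleton hw) (Set.singleton_subset_iff.mpr hg)).symm
  have hsplit : deg G C v = deg G (C \ {g}) v + deg G {g} v := by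
    rw [← deg_union Set.disjoint_sdiff_left,
      Set.sdiff_union_of_subset (Set.singleton_subset_iff.mpr hg)]
  rw [hC.2.2 v ⟨g, hg, hv⟩, deg_singleton_of_ends hw] at hsplit
  have : ¬ (v = v ∧ w = v) := fun h => hvw h.2.symm
  rw [if_pos (Or.inl rfl), if_neg this] at hsplit
  exact one_le_deg_iff.mp (by omega)

open Classical in
lemma IsCycle.deg_sdiff_singleton (hC : IsCycle G C) (hg : g ∈ C) (huw : G.ends g = s(u, w))
    (hne : u ≠ w) (hx : x ∈ VX G (C \ {g})) :
    deg G (C \ {g}) x = if x = u ∨ x = w then 1 else 2 := by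
  have hsplit : deg G C x = deg G (C \ {g}) x + deg G {g} x := by
    rw [← deg_union Set.disjoint_sdiff_left,
      Set.sdiff_union_of_subset (Set.singleton_subset_iff.mpr hg)]
  rw [hC.2.2 x (VX_mono Set.sdiff_subset hx), deg_singleton_of_ends huw,
    if_neg (show ¬ (u = x ∧ w = x) from fun h => hne (h.1.trans h.2.symm))] at hsplit
  split_ifs at hsplit ⊢ <;> omega

lemma ConnOn.VX_sdiff_singleton_of_isCycle (hX : ConnOn G X) (hC : IsCycle G C) (hCX : C ⊆ X)
    (hg : g ∈ C) (hXg : X ≠ {g}) : VX G (X \ {g}) = VX G X := by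
  refine (VX_mono Set.sdiff_subset).antisymm fun x ⟨f, hf, hxf⟩ => ?_
  by_cases hfg : f = g
  swap
  · exact ⟨f, ⟨hf, hfg⟩, hxf⟩
  subst hfg
  by_cases hCf : C = {f}
  · obtain ⟨u, hu⟩ := (hCf ▸ hC).exists_loop_of_singleton
    obtain ⟨h, hh, y, ⟨_, rfl, hyf⟩, hyh⟩ := hX.exists_edge_at_boundary
      ((Set.singleton_subset_iff.mpr hf).ssubset_of_ne (Ne.symm hXg)) (Set.singleton_nonempty f)
    rw [hu, Sym2.mem_iff, or_self] at hxf hyf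
    exact ⟨h, hh, hxf ▸ hyf ▸ hyh⟩
  · exact VX_mono (Set.sdiff_subset_sdiff_left hCX) (hC.mem_VX_sdiff_singleton hg hCf hxf)

lemma IsCycle.not_twoCycles (hC : IsCycle G C) (hX : X ⊆ C) : ¬ TwoCycles G X :=
  fun ⟨_, _, h₁, h₂, hC₁, hC₂, hne⟩ =>
    hne ((hC.eq_of_subset hC₁ (h₁.trans hX)).trans (hC.eq_of_subset hC₂ (h₂.trans hX)).symm)

lemma exists_isBicycle_subset (hX : ConnOn G X) (h2 : TwoCycles G X) :
    ∃ Z ⊆ X, IsBicycle G Z := by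
  obtain ⟨Z, hZX, hZ⟩ := exists_minimal_le_of_wellFoundedLT
    (fun Z => ConnOn G Z ∧ TwoCycles G Z) X ⟨hX, h2⟩
  exact ⟨Z, hZX, hZ.prop, fun Y hY => hZ.not_prop_of_lt hY⟩

lemma IsPseudoforest.union_of_separated {I J A : Set E} (hI : IsPseudoforest G I)
    (hJ : IsPseudoforest G J) (hIA : I ⊆ A) (hJA : J ⊆ Aᶜ)
    (hsep : ∀ Z, IsBicycle G Z → Z ⊆ A ∨ Z ⊆ Aᶜ) : IsPseudoforest G (I ∪ J) := by
  intro W hW hWc h2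
  obtain ⟨Z, hZW, ⟨hZc, hZ2⟩, hZmin⟩ := exists_isBicycle_subset hWc h2
  rcases hsep Z ⟨⟨hZc, hZ2⟩, hZmin⟩ with h | h
  · exact hI Z (fun z hz => (hW (hZW hz)).resolve_right fun hzJ => hJA hzJ (h hz)) hZc hZ2
  · exact hJ Z (fun z hz => (hW (hZW hz)).resolve_left fun hzI => h hz (hIA hzI)) hZc hZ2

end Cycles

section Walks

variable {vs : ℕ → V} {ε : ℕ → E} {n : ℕ}

lemma closedWalk_succ_eq_iff (hclosed : vs n = vs 0)
    (hinj : ∀ i < n, ∀ j < n, vs i = vs j → i = j) {i j : ℕ} (hi : i < n) (hj : j < n) :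
    vs (j + 1) = vs i ↔ j + 1 = i ∨ (j + 1 = n ∧ i = 0) := by
  rcases Nat.lt_or_ge (j + 1) n with h | h
  · refine ⟨fun h' => Or.inl (hinj _ h _ hi h'), ?_⟩
    rintro (rfl | ⟨h', rfl⟩)
    exacts [rfl, by omega]
  · obtain rfl : j + 1 = n := by omega
    rw [hclosed]
    refine ⟨fun h' => Or.inr ⟨rfl, (hinj _ (by omega) _ hi h').symm⟩, ?_⟩
    rintro (rfl | ⟨-, rfl⟩)
    exacts [by omega, rfl]

lemma closedWalk_edge_injOn (hn : 3 ≤ n) (hends : ∀ i, G.ends (ε i) = s(vs i, vs (i + 1)))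
    (hclosed : vs n = vs 0) (hinj : ∀ i < n, ∀ j < n, vs i = vs j → i = j) {i j : ℕ}
    (hi : i < n) (hj : j < n) (h : ε i = ε j) : i = j := by
  have := congrArg G.ends h
  rw [hends, hends, Sym2.eq_iff] at this
  rcases this with ⟨h1, -⟩ | ⟨h1, h2⟩
  · exact hinj _ hi _ hj h1
  · have := (closedWalk_succ_eq_iff hclosed hinj hi hj).mp h1.symm
    have := (closedWalk_succ_eq_iff hclosed hinj hj hi).mp h2
    omega

lemma closedWalk_edges_at (hends : ∀ i, G.ends (ε i) = s(vs i, vs (i + 1)))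
    (hclosed : vs n = vs 0) (hinj : ∀ i < n, ∀ j < n, vs i = vs j → i = j) {i : ℕ}
    (hi : i < n) :
    {f ∈ ε '' Set.Iio n | vs i ∈ G.ends f} = {ε i, ε (if i = 0 then n - 1 else i - 1)} := by
  have hmem {j} (hj : j < n) :
      vs i ∈ G.ends (ε j) ↔ j = i ∨ j + 1 = i ∨ (j + 1 = n ∧ i = 0) := by
    rw [hends, Sym2.mem_iff, eq_comm (a := vs i), eq_comm (a := vs i),
      closedWalk_succ_eq_iff hclosed hinj hi hj]
    exact or_congr ⟨hinj _ hj _ hi, fun h => h ▸ rfl⟩ Iff.rfl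
  ext f
  simp only [Set.mem_ofPred_eq, Set.mem_image, Set.mem_Iio, Set.mem_insert_iff,
    Set.mem_singleton_iff]
  constructor
  · rintro ⟨⟨j, hj, rfl⟩, hvj⟩
    rcases (hmem hj).mp hvj with rfl | h
    · exact Or.inl rfl
    · exact Or.inr (congrArg ε (by split_ifs <;> omega))
  · rintro (rfl | rfl)
    · exact ⟨⟨i, hi, rfl⟩, (hmem hi).mpr (Or.inl rfl)⟩
    · exact ⟨⟨_, by split_ifs <;> omega, rfl⟩, (hmem (by split_ifs <;> omega)).mpr
        (by split_ifs <;> omega)⟩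

lemma isCycle_of_closedWalk [Finite E] (hn : 3 ≤ n)
    (hends : ∀ i, G.ends (ε i) = s(vs i, vs (i + 1))) (hclosed : vs n = vs 0)
    (hinj : ∀ i < n, ∀ j < n, vs i = vs j → i = j) : IsCycle G (ε '' Set.Iio n) := by
  have hVX : ∀ v ∈ VX G (ε '' Set.Iio n), ∃ i < n, v = vs i := by
    rintro v ⟨_, ⟨j, hj, rfl⟩, hv⟩
    rw [Set.mem_Iio] at hj
    rw [hends, Sym2.mem_iff] at hv
    rcases hv with rfl | rfl
    · exact ⟨j, hj, rfl⟩
    · rcases Nat.lt_or_ge (j + 1) n with h | h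
      · exact ⟨j + 1, h, rfl⟩
      · exact ⟨0, by omega, by rw [show j + 1 = n by omega, hclosed]⟩
  have hpath : ∀ i < n, Relation.ReflTransGen (EAdj G (ε '' Set.Iio n)) (ε 0) (ε i) := by
    intro i hi
    induction i with
    | zero => rfl
    | succ i ih =>
      exact (ih (by omega)).tail ⟨⟨i, by simp; omega, rfl⟩, ⟨i + 1, hi, rfl⟩, vs (i + 1),
        by simp [hends], by simp [hends]⟩
  refine ⟨⟨ε 0, 0, by simp; omega, rfl⟩, ?_, fun v hv => ?_⟩
  · rintro _ ⟨i, hi, rfl⟩ _ ⟨j, hj, rfl⟩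
    exact (reflTransGen_eAdj_symm (hpath i hi)).trans (hpath j hj)
  obtain ⟨i, hi, rfl⟩ := hVX v hv
  have hloops : {f ∈ ε '' Set.Iio n | G.ends f = s(vs i, vs i)} = ∅ := by
    refine Set.eq_empty_of_forall_notMem ?_
    rintro _ ⟨⟨j, hj, rfl⟩, hloop⟩
    rw [hends, Sym2.eq_iff] at hloop
    have := (closedWalk_succ_eq_iff hclosed hinj hj hj).mp (by grind)
    omega
  have hne : ε i ≠ ε (if i = 0 then n - 1 else i - 1) := fun h => by
    have := closedWalk_edge_injOn hn hends hclosed hinj hi (by split_ifs <;> omega) h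
    split_ifs at this <;> omega
  rw [deg, closedWalk_edges_at hends hclosed hinj hi, hloops, Set.ncard_pair hne,
    Set.ncard_empty]

lemma exists_nonbacktracking_walk
    (hnext : ∀ e ∈ X, ∀ v ∈ G.ends e, ∃ f ∈ X, f ≠ e ∧ v ∈ G.ends f)
    (he : e ∈ X) :
    ∃ (vs : ℕ → V) (ε : ℕ → E), (∀ i, ε i ∈ X) ∧
      (∀ i, G.ends (ε i) = s(vs i, vs (i + 1))) ∧ ∀ i, ε (i + 1) ≠ ε i := by
  choose nxt hnxtX hnxt_ne hnxt_mem using hnext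
  let T := {p : E × V // p.1 ∈ X ∧ p.2 ∈ G.ends p.1}
  -- a state is an edge together with the end through which the walk leaves it
  let step : T → T := fun p =>
    ⟨(nxt _ p.2.1 _ p.2.2, Sym2.Mem.other (hnxt_mem _ p.2.1 _ p.2.2)), hnxtX _ _ _ _,
      Sym2.other_mem _⟩
  obtain ⟨w, hw⟩ := exists_mem_ends G e
  let state : ℕ → T := fun i => step^[i] ⟨(e, w), he, hw⟩
  have hstate i : state (i + 1) = step (state i) := Function.iterate_succ_apply' _ _ _
  refine ⟨fun i => Nat.casesOn i (Sym2.Mem.other hw) fun i => (state i).1.2,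
    fun i => (state i).1.1, fun i => (state i).2.1, fun i => ?_, fun i => ?_⟩
  · cases i with
    | zero => exact ((Sym2.other_spec hw).symm.trans Sym2.eq_swap : _)
    | succ i =>
      simp only [hstate]
      exact (Sym2.other_spec _).symm
  · simp only [hstate]
    exact hnxt_ne _ _ _ _

/-- The walk between the first repeated vertex and its earlier occurrence is a cycle. -/
lemma exists_isCycle_of_nonbacktracking_walk [Finite V] [Finite E]
    (hloop : ∀ e ∈ X, ∀ u, G.ends e ≠ s(u, u))
    (hsimple : ∀ e ∈ X, ∀ f ∈ X, G.ends e = G.ends f → e = f) (hεX : ∀ i, ε i ∈ X)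
    (hends : ∀ i, G.ends (ε i) = s(vs i, vs (i + 1))) (hnb : ∀ i, ε (i + 1) ≠ ε i) :
    ∃ C ⊆ X, IsCycle G C := by
  classical
  have hrep : ∃ j, ∃ i < j, vs i = vs j := by
    obtain ⟨a, b, hab, h⟩ := Finite.exists_ne_map_eq_of_infinite vs
    rcases Nat.lt_or_gt_of_ne hab with hlt | hlt
    exacts [⟨b, a, hlt, h⟩, ⟨a, b, hlt, h.symm⟩]
  obtain ⟨i, hij, hvij⟩ := Nat.find_spec hrep
  set j := Nat.find hrep
  have hfirst : ∀ a < j, ∀ b < j, vs a = vs b → a = b := by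
    intro a ha b hb h
    by_contra hab
    rcases Nat.lt_or_gt_of_ne hab with hlt | hlt
    exacts [Nat.find_min hrep hb ⟨a, hlt, h⟩, Nat.find_min hrep ha ⟨b, hlt, h.symm⟩]
  have hlen : 3 ≤ j - i := by
    by_contra! hlt
    obtain h | h : j = i + 1 ∨ j = i + 2 := by omega
    · exact hloop _ (hεX i) (vs i) (by rw [hends, ← h, hvij])
    · refine hnb i (hsimple _ (hεX _) _ (hεX _) ?_)
      rw [hends, hends, ← h, ← hvij, Sym2.eq_swap]
  refine ⟨(fun k => ε (i + k)) '' Set.Iio (j - i), ?_,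
    isCycle_of_closedWalk (vs := fun k => vs (i + k)) hlen (fun k => hends (i + k))
      (by simp only [add_zero]; rw [Nat.add_sub_cancel' hij.le, hvij])
      fun a ha b hb h => by have := hfirst _ (by omega) _ (by omega) h; omega⟩
  rintro _ ⟨k, -, rfl⟩
  exact hεX _

lemma exists_isCycle_of_two_le_deg [Finite V] [Finite E]
    (hdeg : ∀ v ∈ VX G X, 2 ≤ deg G X v) (hX : X.Nonempty) : ∃ C ⊆ X, IsCycle G C := by
  by_cases hloop : ∃ e ∈ X, ∃ u, G.ends e = s(u, u)
  · obtain ⟨e, he, u, hu⟩ := hloop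
    exact ⟨{e}, Set.singleton_subset_iff.mpr he, isCycle_singleton hu⟩
  push Not at hloop
  by_cases hpar : ∃ e ∈ X, ∃ f ∈ X, e ≠ f ∧ G.ends e = G.ends f
  · obtain ⟨e, he, f, hf, hef, hends⟩ := hpar
    obtain ⟨u, w, huw⟩ := exists_ends_eq G e
    refine ⟨{e, f}, Set.insert_subset he (Set.singleton_subset_iff.mpr hf),
      isCycle_pair huw (hends ▸ huw) ?_ hef⟩
    rintro rfl
    exact hloop e he u huw
  push Not at hpar
  have hnext : ∀ e ∈ X, ∀ v ∈ G.ends e, ∃ f ∈ X, f ≠ e ∧ v ∈ G.ends f := by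
    intro e he v hv
    by_contra! h
    have hinc : {f ∈ X | v ∈ G.ends f} ⊆ {e} := fun f hf =>
      by_contra fun hfe => h f hf.1 hfe hf.2
    have hloops : {f ∈ X | G.ends f = s(v, v)} = ∅ :=
      Set.eq_empty_of_forall_notMem fun f hf => hloop f hf.1 v hf.2
    have h2 := hdeg v ⟨e, he, hv⟩
    have h1 := Set.ncard_le_ncard hinc
    rw [deg, hloops, Set.ncard_empty] at h2
    rw [Set.ncard_singleton] at h1
    omega
  obtain ⟨e, he⟩ := hX
  obtain ⟨vs, ε, hεX, hends, hnb⟩ := exists_nonbacktracking_walk hnext he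
  exact exists_isCycle_of_nonbacktracking_walk hloop
    (fun e he f hf h => by_contra fun hef => hpar e he f hf hef h) hεX hends hnb

end Walks

section Excess

variable [Finite V] [Finite E] {Y₁ Y₂ : Set E}

lemma ncard_sdiff_insert_lt (hg : g ∈ X \ Y) : (X \ insert g Y).ncard < (X \ Y).ncard :=
  Set.ncard_lt_ncard ⟨Set.sdiff_subset_sdiff_right (Set.subset_insert _ _),
    fun h => (h hg).2 (Set.mem_insert _ _)⟩

/-- The excess `|Y| - |V(Y)|` grows from `Y` to `X`: adding an edge at the boundary brings at most
one new vertex. -/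
lemma ConnOn.excess_mono (hX : ConnOn G X) (hY : ConnOn G Y) (hYX : Y ⊆ X)
    (hY0 : Y.Nonempty) : Y.ncard + (VX G X).ncard ≤ X.ncard + (VX G Y).ncard := by
  induction hn : (X \ Y).ncard using Nat.strong_induction_on generalizing Y with
  | _ n ih =>
  rcases hYX.eq_or_ssubset with rfl | hss
  · rfl
  obtain ⟨g, hg, v, hvY, hvg⟩ := hX.exists_edge_at_boundary hss hY0
  have := ih _ (hn ▸ ncard_sdiff_insert_lt hg) (hY.insert_edge hvY hvg)
    (Set.insert_subset hg.1 hYX) (Set.insert_nonempty _ _) rfl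
  have := ncard_VX_insert_le hvY hvg
  have := Set.ncard_insert_of_notMem hg.2 (Set.toFinite Y)
  omega

lemma ConnOn.ncard_VX_le (hX : ConnOn G X) (hX0 : X.Nonempty) :
    (VX G X).ncard ≤ X.ncard + 1 := by
  obtain ⟨e, he⟩ := hX0
  obtain ⟨u, w, huw⟩ := exists_ends_eq G e
  have := hX.excess_mono connOn_singleton (Set.singleton_subset_iff.mpr he) ⟨e, rfl⟩
  have : ({u, w} : Set V).ncard ≤ 2 := (Set.ncard_insert_le _ _).trans (by simp)
  rw [Set.ncard_singleton, VX_singleton huw] at *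
  omega

/-- Linking two vertex-disjoint connected parts inside `X` costs one more edge than vertices. -/
lemma ConnOn.excess_mono_two (hX : ConnOn G X) (hY₁ : ConnOn G Y₁) (hY₂ : ConnOn G Y₂)
    (h₁ : Y₁ ⊆ X) (h₂ : Y₂ ⊆ X) (hY₁0 : Y₁.Nonempty) (hY₂0 : Y₂.Nonempty)
    (hdisj : Disjoint (VX G Y₁) (VX G Y₂)) :
    Y₁.ncard + Y₂.ncard + 1 + (VX G X).ncard ≤
      X.ncard + (VX G Y₁).ncard + (VX G Y₂).ncard := by
  induction hn : (X \ Y₁).ncard using Nat.strong_induction_on generalizing Y₁ with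
  | _ n ih =>
  have hss : Y₁ ⊂ X := h₁.ssubset_of_ne fun h => by
    obtain ⟨e, he⟩ := hY₂0
    obtain ⟨v, hv⟩ := exists_mem_ends G e
    exact Set.disjoint_left.mp hdisj ⟨e, h ▸ h₂ he, hv⟩ ⟨e, he, hv⟩
  obtain ⟨g, hg, v, hvY₁, hvg⟩ := hX.exists_edge_at_boundary hss hY₁0
  have hgY₂ : g ∉ Y₂ := fun h => Set.disjoint_left.mp hdisj hvY₁ ⟨g, h, hvg⟩
  have hcard₁ := Set.ncard_insert_of_notMem hg.2 (Set.toFinite Y₁)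
  have hVX₁ := ncard_VX_insert_le hvY₁ hvg
  by_cases htouch : ∃ w ∈ G.ends g, w ∈ VX G Y₂
  · obtain ⟨w, hwg, hwY₂⟩ := htouch
    have hvw : v ≠ w := fun h => Set.disjoint_left.mp hdisj hvY₁ (h ▸ hwY₂)
    have hW : ConnOn G (insert g Y₁ ∪ Y₂) :=
      (hY₁.insert_edge hvY₁ hvg).union hY₂ ⟨g, Set.mem_insert _ _, hwg⟩ hwY₂
    have hVW := VX_insert_union_subset hvw hvg hwg hvY₁ hwY₂
    have := hX.excess_mono hW (Set.union_subset (Set.insert_subset hg.1 h₁) h₂)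
      (Set.insert_nonempty _ _ |>.mono Set.subset_union_left)
    have := Set.ncard_union_eq (Set.disjoint_insert_left.mpr
      ⟨hgY₂, disjoint_of_disjoint_VX hdisj⟩) (Set.toFinite (insert g Y₁))
      (Set.toFinite Y₂)
    have := (Set.ncard_le_ncard hVW).trans (Set.ncard_union_le _ _)
    omega
  · push Not at htouch
    have hdisj' : Disjoint (VX G (insert g Y₁)) (VX G Y₂) := by
      rw [Set.insert_eq, VX_union]
      exact Set.disjoint_union_left.mpr
        ⟨Set.disjoint_left.mpr fun x ⟨_, hx, hxg⟩ => htouch x (hx ▸ hxg), hdisj⟩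
    have := ih _ (hn ▸ ncard_sdiff_insert_lt hg) (hY₁.insert_edge hvY₁ hvg)
      (Set.insert_subset hg.1 h₁) (Set.insert_nonempty _ _) hdisj' rfl
    omega

end Excess

section Forests

variable [Finite V] [Finite E]

lemma Acyclic.exists_deg_eq_one (hac : Acyclic G X) (hX : X.Nonempty) :
    ∃ v ∈ VX G X, deg G X v = 1 := by
  by_contra! h
  obtain ⟨C, hCX, hC⟩ := exists_isCycle_of_two_le_deg (fun v hv => by
    have := one_le_deg_iff.mpr hv
    have := h v hv
    omega) hX
  exact hac C hCX hC

/-- Induction removing a leaf edge, which loses exactly one vertex. -/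
lemma Acyclic.ncard_add_one_le (hac : Acyclic G X) (hX : X.Nonempty) :
    X.ncard + 1 ≤ (VX G X).ncard := by
  induction hn : X.ncard using Nat.strong_induction_on generalizing X with
  | _ n ih =>
  obtain ⟨v, hvX, hv1⟩ := hac.exists_deg_eq_one hX
  obtain ⟨e, he, hve, hloop, huniq⟩ := exists_unique_of_deg_eq_one hv1
  have hcardX := Set.ncard_sdiff_singleton_add_one he
  rcases (X \ {e}).eq_empty_or_nonempty with h0 | hX'
  · obtain ⟨w, hew⟩ := Sym2.mem_iff_exists.mp hve
    have hvw : v ≠ w := fun h => hloop (h ▸ hew)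
    have := Set.ncard_le_ncard (show ({v, w} : Set V) ⊆ VX G X by
      rintro x (rfl | rfl) <;> exact ⟨e, he, by simp [hew]⟩)
    rw [h0, Set.ncard_empty] at hcardX
    rw [Set.ncard_pair hvw] at this
    omega
  · have hv' : v ∉ VX G (X \ {e}) := fun ⟨f, hf, hvf⟩ => hf.2 (huniq f hf.1 hvf)
    have := ih _ (by omega) (fun C hC => hac C (hC.trans Set.sdiff_subset)) hX' rfl
    have := Set.ncard_le_ncard (show VX G (X \ {e}) ⊆ VX G X \ {v} from
      fun x hx => ⟨VX_mono Set.sdiff_subset hx, fun h => hv' (h ▸ hx)⟩)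
    have := Set.ncard_sdiff_singleton_add_one hvX
    omega

lemma ConnOn.ncard_add_one_eq_of_acyclic (hX : ConnOn G X) (hac : Acyclic G X)
    (hX0 : X.Nonempty) : X.ncard + 1 = (VX G X).ncard :=
  le_antisymm (hac.ncard_add_one_le hX0) (hX.ncard_VX_le hX0)

lemma exists_isCycle_of_ncard_VX_le (hX0 : X.Nonempty) (h : (VX G X).ncard ≤ X.ncard) :
    ∃ C ⊆ X, IsCycle G C := by
  by_contra! hac
  have := Acyclic.ncard_add_one_le (fun C hC => hac C hC) hX0
  omega

open Classical in
/-- Counting degrees, since a tree has `|V(X)| = |X| + 1`. -/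
lemma ConnOn.exists_two_leaves [Fintype V] (hX : ConnOn G X) (hac : Acyclic G X)
    (hX0 : X.Nonempty) : ∃ u w, u ≠ w ∧ deg G X u = 1 ∧ deg G X w = 1 := by
  have hpt v :
      2 * (if v ∈ VX G X then 1 else 0) ≤ deg G X v + if deg G X v = 1 then 1 else 0 := by
    by_cases hv : v ∈ VX G X
    · have := one_le_deg_iff.mpr hv
      split_ifs <;> omega
    · simp [hv]
  have hsum := Finset.sum_le_sum fun v (_ : v ∈ Finset.univ) => hpt v
  rw [← Finset.mul_sum, sum_ite_mem_VX, Finset.sum_add_distrib, sum_deg, Finset.sum_boole,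
    ← hX.ncard_add_one_eq_of_acyclic hac hX0] at hsum
  obtain ⟨u, hu, w, hw, huw⟩ := Finset.one_lt_card.mp (show 1 < (Finset.univ.filter
    fun v => deg G X v = 1).card by simp only [Nat.cast_id] at hsum; omega)
  exact ⟨u, w, huw, (Finset.mem_filter.mp hu).2, (Finset.mem_filter.mp hw).2⟩

end Forests

section TwoCycles

variable [Fintype V] [Finite E]

lemma twoCycles_of_ncard_VX_lt (h : (VX G X).ncard < X.ncard) : TwoCycles G X := by
  obtain ⟨C₁, hC₁X, hC₁⟩ :=
    exists_isCycle_of_ncard_VX_le (Set.nonempty_of_ncard_ne_zero (by omega)) h.le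
  obtain ⟨g, hg⟩ := hC₁.1
  have := Set.ncard_sdiff_singleton_add_one (hC₁X hg)
  have := (Set.ncard_pos (Set.toFinite _)).mpr (VX_nonempty (G := G) ⟨g, hC₁X hg⟩)
  have := Set.ncard_le_ncard (VX_mono (G := G) (Set.sdiff_subset : X \ {g} ⊆ X))
  obtain ⟨C₂, hC₂X, hC₂⟩ := exists_isCycle_of_ncard_VX_le (G := G) (X := X \ {g})
    (Set.nonempty_of_ncard_ne_zero (by omega)) (by omega)
  exact ⟨C₁, C₂, hC₁X, hC₂X.trans Set.sdiff_subset, hC₁, hC₂,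
    fun h => (hC₂X (h ▸ hg)).2 rfl⟩

/-- Two distinct cycles either are vertex-disjoint, or share fewer edges (a forest) than
vertices. -/
lemma ConnOn.ncard_VX_lt_of_twoCycles (hX : ConnOn G X) (h : TwoCycles G X) :
    (VX G X).ncard < X.ncard := by
  obtain ⟨C₁, C₂, h₁, h₂, hC₁, hC₂, hne⟩ := h
  have := hC₁.ncard_VX
  have := hC₂.ncard_VX
  rcases Set.disjoint_or_nonempty_inter (VX G C₁) (VX G C₂) with hdisj | ⟨v, hv₁, hv₂⟩
  · have := hX.excess_mono_two hC₁.2.1 hC₂.2.1 h₁ h₂ hC₁.1 hC₂.1 hdisj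
    omega
  have hU := hX.excess_mono (hC₁.2.1.union hC₂.2.1 hv₁ hv₂) (Set.union_subset h₁ h₂)
    (hC₁.1.mono Set.subset_union_left)
  have hE := Set.ncard_union_add_ncard_inter C₁ C₂
  have hV := Set.ncard_union_add_ncard_inter (VX G C₁) (VX G C₂)
  rw [← VX_union] at hV
  have hVpos : 0 < (VX G C₁ ∩ VX G C₂).ncard :=
    (Set.ncard_pos (Set.toFinite _)).mpr ⟨v, hv₁, hv₂⟩
  rcases (C₁ ∩ C₂).eq_empty_or_nonempty with h0 | hI
  · rw [h0, Set.ncard_empty] at hE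
    omega
  have hacI : Acyclic G (C₁ ∩ C₂) := fun D hD hDc => hne <|
    (hC₁.eq_of_subset hDc (hD.trans Set.inter_subset_left)).symm.trans
      (hC₂.eq_of_subset hDc (hD.trans Set.inter_subset_right))
  have := hacI.ncard_add_one_le hI
  have := Set.ncard_le_ncard (Set.subset_inter
    (VX_mono (G := G) (Set.inter_subset_left : C₁ ∩ C₂ ⊆ C₁))
    (VX_mono Set.inter_subset_right))
  omega

end TwoCycles

section CycleEdgeDeletion

variable [Fintype V] [Finite E]

open Classical in
/-- Handshake parity: `u` would be the only vertex of odd degree. -/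
lemma false_of_unique_odd_deg (hu : u ∈ VX G K)
    (h : ∀ x ∈ VX G K, deg G K x = if x = u then 1 else 2) : False := by
  have hpt x : deg G K x + (if x = u then 1 else 0) = 2 * if x ∈ VX G K then 1 else 0 := by
    by_cases hx : x ∈ VX G K
    · rw [h x hx]
      split_ifs <;> rfl
    · rw [deg_eq_zero hx, if_neg hx, if_neg (fun (h : x = u) => hx (h ▸ hu))]
  have := Finset.sum_congr rfl fun x (_ : x ∈ Finset.univ) => hpt x
  rw [Finset.sum_add_distrib, sum_deg, Finset.sum_ite_eq', if_pos (Finset.mem_univ _),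
    ← Finset.mul_sum, sum_ite_mem_VX] at this
  omega

/-- A component of `C \ {g}` avoiding both ends of `g` would be a smaller cycle; one containing
just one of them would have a single vertex of odd degree. -/
lemma IsCycle.connOn_sdiff_singleton (hC : IsCycle G C) (hg : g ∈ C) : ConnOn G (C \ {g}) := by
  classical
  intro a ha b hb
  obtain ⟨u, w, huw⟩ := exists_ends_eq G g
  have hne : u ≠ w := by
    rintro rfl
    have := hC.eq_of_subset (isCycle_singleton huw) (Set.singleton_subset_iff.mpr hg)
    exact ha.2 (this ▸ ha.1)
  have hdeg : ∀ c ∈ C \ {g}, ∀ x ∈ VX G (component G (C \ {g}) c),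
      deg G (component G (C \ {g}) c) x = if x = u ∨ x = w then 1 else 2 := fun c _ x hx => by
    rw [deg_component hx]
    exact hC.deg_sdiff_singleton hg huw hne (VX_mono component_subset hx)
  have hu : ∀ c ∈ C \ {g}, u ∈ VX G (component G (C \ {g}) c) := by
    intro c hc
    by_contra hu
    by_cases hw : w ∈ VX G (component G (C \ {g}) c)
    · refine false_of_unique_odd_deg hw fun x hx => ?_
      rw [hdeg c hc x hx]
      congr 1
      exact propext ⟨fun h => h.resolve_left fun h' => hu (h' ▸ hx), Or.inr⟩
    · have hK : IsCycle G (component G (C \ {g}) c) :=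
        ⟨component_nonempty hc, connOn_component, fun x hx => by
          rw [hdeg c hc x hx, if_neg]
          rintro (rfl | rfl)
          exacts [hu hx, hw hx]⟩
      have hgK : g ∈ component G (C \ {g}) c := by
        rw [hC.eq_of_subset hK (component_subset.trans Set.sdiff_subset)]
        exact hg
      exact (component_subset hgK).2 rfl
  have := component_eq_of_mem_VX (hu a ha) (hu b hb)
  exact (this ▸ mem_component_self hb : b ∈ component G (C \ {g}) a).2

lemma ConnOn.sdiff_singleton_of_isCycle (hX : ConnOn G X) (hC : IsCycle G C) (hCX : C ⊆ X)
    (hg : g ∈ C) : ConnOn G (X \ {g}) := by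
  refine hX.sdiff_singleton_of_linked fun c hc d hd ⟨vc, hvc, hvcg⟩ ⟨vd, hvd, hvdg⟩ => ?_
  by_cases hCg : C = {g}
  · obtain ⟨u, hu⟩ := (hCg ▸ hC).exists_loop_of_singleton
    rw [hu, Sym2.mem_iff, or_self] at hvcg hvdg
    exact .single ⟨hc, hd, u, hvcg ▸ hvc, hvdg ▸ hvd⟩
  obtain ⟨ec, hec, hvcec⟩ := hC.mem_VX_sdiff_singleton hg hCg hvcg
  obtain ⟨ed, hed, hvded⟩ := hC.mem_VX_sdiff_singleton hg hCg hvdg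
  have hsub : C \ {g} ⊆ X \ {g} := Set.sdiff_subset_sdiff_left hCX
  exact ((Relation.ReflTransGen.single ⟨hc, hsub hec, vc, hvc, hvcec⟩).trans
    (reflTransGen_eAdj_mono hsub (hC.connOn_sdiff_singleton hg ec hec ed hed))).tail
    ⟨hsub hed, hd, vd, hvded, hvd⟩

/-- A minimal connected spanning subset keeping a cycle has only one: with two cycles, an edge of
one that is not on the other could still be deleted. -/
lemma ConnOn.exists_unicyclic_spanning (hK : ConnOn G K) (hac : ¬ Acyclic G K) :
    ∃ Z ⊆ K, ConnOn G Z ∧ VX G Z = VX G K ∧ Z.ncard = (VX G Z).ncard := by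
  obtain ⟨Z, hZK, hZmin⟩ := exists_minimal_le_of_wellFoundedLT
    (fun Z => ConnOn G Z ∧ VX G Z = VX G K ∧ ¬ Acyclic G Z) K ⟨hK, rfl, hac⟩
  obtain ⟨hZ, hZVX, hZac⟩ := hZmin.prop
  refine ⟨Z, hZK, hZ, hZVX, le_antisymm ?_ ?_⟩
  · by_contra! hlt
    obtain ⟨D₁, D₂, hD₁, hD₂, hD₁c, hD₂c, hne⟩ := twoCycles_of_ncard_VX_lt hlt
    obtain ⟨g, hg₁, hg₂⟩ : ∃ g ∈ D₁, g ∉ D₂ := by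
      by_contra! h
      exact hne (hD₂c.eq_of_subset hD₁c h)
    have hZg : Z ≠ {g} := fun h => hg₂ (by
      obtain ⟨d, hd⟩ := hD₂c.1
      obtain rfl := Set.mem_singleton_iff.mp (h ▸ hD₂ hd)
      exact hd)
    refine hZmin.not_prop_of_lt (Set.sdiff_singleton_ssubset.mpr (hD₁ hg₁))
      ⟨hZ.sdiff_singleton_of_isCycle hD₁c hD₁ hg₁,
        (hZ.VX_sdiff_singleton_of_isCycle hD₁c hD₁ hg₁ hZg).trans hZVX,
        fun hac' => hac' D₂ (fun d hd => ⟨hD₂ hd, fun h => hg₂ (h ▸ hd)⟩) hD₂c⟩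
  · obtain ⟨C, hCZ, hC⟩ : ∃ C ⊆ Z, IsCycle G C := by
      by_contra! h
      exact hZac fun C hC => h C hC
    have := hZ.excess_mono hC.2.1 hCZ hC.1
    have := hC.ncard_VX
    omega

end CycleEdgeDeletion

section Components

variable [Finite E]

lemma component_induction (G : MGraph V E) {P : Set E → Prop} (empty : P ∅)
    (peel : ∀ A e, e ∈ A → P (A \ component G A e) → P A) (A : Set E) : P A := by
  induction hn : A.ncard using Nat.strong_induction_on generalizing A with
  | _ n ih =>
  rcases A.eq_empty_or_nonempty with rfl | ⟨e, he⟩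
  · exact empty
  refine peel A e he (ih _ ?_ _ rfl)
  exact hn ▸ Set.ncard_lt_ncard
    (Set.sdiff_ssubset_left_iff.mpr ⟨e, he, mem_component_self he⟩)

open Classical in
lemma ncard_components_sep_sdiff_component (he : e ∈ A) (Q : Set E → Prop) :
    ({K ∈ components G (A \ component G A e) | Q K}).ncard +
      (if Q (component G A e) then 1 else 0) = ({K ∈ components G A | Q K}).ncard := by
  have hsep : {K ∈ components G (A \ component G A e) | Q K} =
      {K ∈ components G A | Q K} \ {component G A e} := by
    rw [components_sdiff_component]
    ext K
    simp only [Set.mem_ofPred_eq, Set.mem_sdiff, Set.mem_singleton_iff]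
    tauto
  split_ifs with hQ
  · rw [hsep, Set.ncard_sdiff_singleton_add_one
      (show component G A e ∈ {K ∈ components G A | Q K} from ⟨⟨e, he, rfl⟩, hQ⟩)]
  · rw [hsep, Set.sdiff_singleton_eq_self fun h => hQ h.2, add_zero]

lemma ncard_sdiff_component_add (A : Set E) (e : E) :
    (A \ component G A e).ncard + (component G A e).ncard = A.ncard :=
  Set.ncard_sdiff_add_ncard_of_subset component_subset

lemma forall_acyclic_of_ncard_le (h : (components G S).ncard ≤
    ({K ∈ components G S | Acyclic G K}).ncard) : ∀ K ∈ components G S, Acyclic G K := by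
  intro K hK
  rw [← Set.eq_of_subset_of_ncard_le (Set.sep_subset _ _) h] at hK
  exact hK.2

variable [Fintype V]

lemma ncard_add_ncard_components_of_acyclic :
    ∀ A : Set E, (∀ K ∈ components G A, Acyclic G K) →
      A.ncard + (components G A).ncard = (VX G A).ncard := by
  refine component_induction G (by simp [components]) fun A e he ih hA => ?_
  have hK := (connOn_component (e := e)).ncard_add_one_eq_of_acyclic
    (hA _ ⟨e, he, rfl⟩) (component_nonempty he)
  have := ih fun K hK => hA K (components_sdiff_component (G := G) ▸ hK).1
  have := ncard_components_sep_sdiff_component (G := G) he fun _ => True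
  simp only [if_true, Set.sep_true] at this
  have := ncard_sdiff_component_add (G := G) A e
  have := ncard_VX_sdiff_component_add (G := G) A e
  omega

lemma ncard_components_add_ncard_acyclic_le (T : Set V) :
    ∀ A : Set E, (∀ K ∈ components G A, (VX G K ∩ T).Nonempty) →
      (∀ K ∈ components G A, Acyclic G K → 2 ≤ (VX G K ∩ T).ncard) →
      (components G A).ncard + ({K ∈ components G A | Acyclic G K}).ncard ≤
        (VX G A ∩ T).ncard := by
  classical
  refine component_induction G (by simp [components]) fun A e he ih h₁ h₂ => ?_
  have hsub K (hK : K ∈ components G (A \ component G A e)) : K ∈ components G A :=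
    (components_sdiff_component (G := G) ▸ hK).1
  have := ih (fun K hK => h₁ K (hsub K hK)) fun K hK => h₂ K (hsub K hK)
  have hall := ncard_components_sep_sdiff_component (G := G) he fun _ => True
  simp only [if_true, Set.sep_true] at hall
  have hac := ncard_components_sep_sdiff_component (G := G) he (Acyclic G)
  have hT : (VX G (A \ component G A e) ∩ T).ncard + (VX G (component G A e) ∩ T).ncard =
      (VX G A ∩ T).ncard := by
    rw [← Set.ncard_union_eq (VX_component_disjoint.symm.mono Set.inter_subset_left
      Set.inter_subset_left), ← Set.union_inter_distrib_right, ← VX_union,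
      Set.sdiff_union_of_subset component_subset]
  have := (Set.ncard_pos (Set.toFinite _)).mpr (h₁ _ ⟨e, he, rfl⟩)
  split_ifs at hac with hK
  · have := h₂ _ ⟨e, he, rfl⟩ hK
    omega
  · omega

lemma IsPseudoforest.ncard_le :
    ∀ I : Set E, IsPseudoforest G I → I.ncard ≤ (VX G I).ncard := by
  refine component_induction G (by simp) fun I e he ih hI => ?_
  have := ih fun W hW => hI W (hW.trans Set.sdiff_subset)
  have : (component G I e).ncard ≤ (VX G (component G I e)).ncard := by
    by_contra! h
    exact hI _ component_subset connOn_component (twoCycles_of_ncard_VX_lt h)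
  have := ncard_sdiff_component_add (G := G) I e
  have := ncard_VX_sdiff_component_add (G := G) I e
  omega

lemma ConnOn.isPseudoforest_of_ncard_eq (hX : ConnOn G X) (h : X.ncard = (VX G X).ncard) :
    IsPseudoforest G X := fun W hWX hW h2 => by
  have := hW.ncard_VX_lt_of_twoCycles h2
  obtain ⟨C, -, hCW, -, hC, -⟩ := h2
  have := hX.excess_mono hW hWX (hC.1.mono hCW)
  omega

open Classical in
lemma ConnOn.exists_isPseudoforest_spanning (hK : ConnOn G K) (hK0 : K.Nonempty) :
    ∃ I ⊆ K, IsPseudoforest G I ∧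
      I.ncard + (if Acyclic G K then 1 else 0) = (VX G K).ncard := by
  by_cases hac : Acyclic G K
  · exact ⟨K, subset_rfl, hac.isPseudoforest, by
      rw [if_pos hac, hK.ncard_add_one_eq_of_acyclic hac hK0]⟩
  · obtain ⟨Z, hZK, hZ, hZVX, hZcard⟩ := hK.exists_unicyclic_spanning hac
    exact ⟨Z, hZK, hZ.isPseudoforest_of_ncard_eq hZcard, by rw [if_neg hac, hZcard, hZVX]; rfl⟩

/-- A spanning tree of each acyclic component of `G[A]` and a spanning unicyclic subset of every
other one. -/
lemma exists_isPseudoforest_subset : ∀ A : Set E, ∃ I ⊆ A, IsPseudoforest G I ∧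
    I.ncard + ({K ∈ components G A | Acyclic G K}).ncard = (VX G A).ncard := by
  classical
  refine component_induction G ⟨∅, subset_rfl, Acyclic.isPseudoforest fun C hC hCc =>
    hCc.1.ne_empty (Set.subset_empty_iff.mp hC), by simp [components]⟩ fun A e he ih => ?_
  obtain ⟨I, hIA, hI, hIcard⟩ := ih
  obtain ⟨J, hJK, hJ, hJcard⟩ := (connOn_component (G := G) (A := A) (e := e)
    ).exists_isPseudoforest_spanning (component_nonempty he)
  have hdisj : Disjoint (VX G J) (VX G I) :=
    VX_component_disjoint.mono (VX_mono hJK) (VX_mono hIA)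
  refine ⟨J ∪ I, Set.union_subset (hJK.trans component_subset) (hIA.trans Set.sdiff_subset),
    hJ.union hI hdisj, ?_⟩
  have := ncard_components_sep_sdiff_component (G := G) he (Acyclic G)
  have := ncard_VX_sdiff_component_add (G := G) A e
  rw [Set.ncard_union_eq (disjoint_of_disjoint_VX hdisj)]
  omega

end Components

section Crossing

variable [Fintype V] [Finite E]

/-- An acyclic component meets `G[Sᶜ]` at least in its two leaves, of degree `≥ 2` in `G`. -/
lemma ncard_components_add_ncard_acyclic_le_of_two_le_deg (hG : GConn G)
    (hdeg : ∀ v, 2 ≤ deg G Set.univ v) (hS : Sᶜ.Nonempty) :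
    (components G S).ncard + ({K ∈ components G S | Acyclic G K}).ncard ≤
      (VX G S ∩ VX G Sᶜ).ncard := by
  refine ncard_components_add_ncard_acyclic_le _ S (fun K ⟨e, he, hK⟩ => hK ▸
    hG.VX_component_inter_nonempty he hS) fun K ⟨e, he, hK⟩ hac => ?_
  subst hK
  obtain ⟨u, w, huw, hu, hw⟩ := connOn_component.exists_two_leaves hac (component_nonempty he)
  have hleaf {x} (hx : deg G (component G S e) x = 1) :
      x ∈ VX G (component G S e) ∩ VX G Sᶜ :=
    have hxK := one_le_deg_iff.mp hx.ge
    ⟨hxK, mem_VX_compl_of_deg_eq_one hdeg (deg_component hxK ▸ hx)⟩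
  rw [← Set.ncard_pair huw]
  exact Set.ncard_le_ncard
    (Set.insert_subset (hleaf hu) (Set.singleton_subset_iff.mpr (hleaf hw)))

lemma card_add_one_le_ncard_univ [Nonempty E] (hG : GConn G)
    (hdeg : ∀ v, 2 ≤ deg G Set.univ v) (hcyc : ¬ IsCycle G Set.univ) :
    Fintype.card V + 1 ≤ (Set.univ : Set E).ncard := by
  obtain ⟨v₀, hv₀⟩ : ∃ v, deg G Set.univ v ≠ 2 := by
    by_contra! h
    exact hcyc ⟨Set.univ_nonempty, hG.connOn_univ, fun v _ => h v⟩
  have := Finset.sum_lt_sum (fun v _ => hdeg v)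
    ⟨v₀, Finset.mem_univ _, lt_of_le_of_ne (hdeg v₀) (Ne.symm hv₀)⟩
  rw [sum_deg, Finset.sum_const, Finset.card_univ, smul_eq_mul] at this
  omega

theorem exists_isBicycle_crossing (hG : GConn G) (hdeg : ∀ v, 2 ≤ deg G Set.univ v)
    (hcyc : ¬ IsCycle G Set.univ) {A : Set E} (hA : A.Nonempty) (hA' : Aᶜ.Nonempty) :
    ∃ Z, IsBicycle G Z ∧ (Z ∩ A).Nonempty ∧ (Z \ A).Nonempty := by
  by_contra! hno
  have hsep : ∀ Z, IsBicycle G Z → Z ⊆ A ∨ Z ⊆ Aᶜ := fun Z hZ => by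
    by_contra! h
    obtain ⟨a, haZ, haA⟩ := Set.not_subset.mp h.2
    obtain ⟨b, hbZ, hbA⟩ := Set.not_subset.mp h.1
    exact Set.eq_empty_iff_forall_notMem.mp (hno Z hZ ⟨a, haZ, not_not.mp haA⟩) b ⟨hbZ, hbA⟩
  have : Nonempty E := hA.to_subtype.map Subtype.val
  have hE := card_add_one_le_ncard_univ hG hdeg hcyc
  obtain ⟨I, hIA, hI, hIcard⟩ := exists_isPseudoforest_subset (G := G) A
  obtain ⟨J, hJA, hJ, hJcard⟩ := exists_isPseudoforest_subset (G := G) Aᶜ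
  have hIJ := (hI.union_of_separated hJ hIA hJA hsep).ncard_le
  rw [Set.ncard_union_eq (Set.disjoint_of_subset hIA hJA disjoint_compl_right)] at hIJ
  have hVIJ := Set.ncard_le_ncard (Set.subset_univ (VX G (I ∪ J)))
  rw [Set.ncard_univ, Nat.card_eq_fintype_card] at hVIJ
  have hsideA := ncard_components_add_ncard_acyclic_le_of_two_le_deg hG hdeg hA'
  have hsideB := ncard_components_add_ncard_acyclic_le_of_two_le_deg (S := Aᶜ) hG hdeg
    (by rwa [compl_compl])
  rw [compl_compl, Set.inter_comm] at hsideB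
  have hVX := Set.ncard_union_add_ncard_inter (VX G A) (VX G Aᶜ)
  rw [← VX_union, Set.union_compl_self, Set.eq_univ_of_forall fun v =>
    one_le_deg_iff.mp ((hdeg v).trans' one_le_two), Set.ncard_univ,
    Nat.card_eq_fintype_card] at hVX
  have haA := Set.ncard_le_ncard (Set.sep_subset (components G A) (Acyclic G))
  have haB := Set.ncard_le_ncard (Set.sep_subset (components G Aᶜ) (Acyclic G))
  have hforestA := ncard_add_ncard_components_of_acyclic A
    (forall_acyclic_of_ncard_le (G := G) (by omega))
  have hforestB := ncard_add_ncard_components_of_acyclic Aᶜ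
    (forall_acyclic_of_ncard_le (G := G) (by omega))
  have := Set.ncard_union_eq (disjoint_compl_right (a := A))
  rw [Set.union_compl_self] at this
  omega

end Crossing

section Necessity

variable [Finite E]

/-- An edge at a vertex of degree one lies on no cycle, so deleting it from a bicycle would leave
a smaller connected set with the same two cycles. -/
lemma IsBicycle.notMem_of_deg_eq_one (hZ : IsBicycle G Z) (hwp : w ∈ G.ends p)
    (hw : deg G Set.univ w = 1) : p ∉ Z := by
  intro hpZ
  obtain ⟨e, -, -, -, huniq⟩ := exists_unique_of_deg_eq_one hw
  have hleaf : ∀ f, w ∈ G.ends f → f = p := fun f hf =>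
    (huniq f trivial hf).trans (huniq p trivial hwp).symm
  have hcyc : ∀ D, IsCycle G D → p ∉ D := fun D hD hpD => by
    have := deg_mono (G := G) (v := w) (Set.subset_univ D)
    rw [hD.2.2 w ⟨p, hpD, hwp⟩] at this
    omega
  obtain ⟨⟨hZc, C₁, C₂, h₁, h₂, hC₁, hC₂, hne⟩, hmin⟩ := hZ
  refine hmin (Z \ {p}) (Set.sdiff_singleton_ssubset.mpr hpZ)
    ⟨hZc.sdiff_singleton_of_leaf hwp fun f _ => hleaf f, C₁, C₂, ?_, ?_, hC₁, hC₂, hne⟩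
  · exact fun c hc => ⟨h₁ hc, fun h => hcyc C₁ hC₁ (h ▸ hc)⟩
  · exact fun c hc => ⟨h₂ hc, fun h => hcyc C₂ hC₂ (h ▸ hc)⟩

end Necessity

section Hypotheses

variable [Fintype V]

lemma GConn.mem_VX_univ (hG : GConn G) (hV : 1 < Fintype.card V) (v : V) :
    v ∈ VX G Set.univ := by
  obtain ⟨u, hu⟩ := Fintype.exists_ne_of_one_lt_card hV v
  rcases (hG v u).cases_head with h | ⟨_, ⟨e, hv, -⟩, -⟩
  exacts [absurd h.symm hu, ⟨e, trivial, hv⟩]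

/-- One edge covers at most two of the (at least three) vertices. -/
lemma GConn.nontrivial_edges (hG : GConn G) (hV : 3 ≤ Fintype.card V) : Nontrivial E := by
  by_contra hE
  have h : ∀ e f : E, e = f := not_nontrivial_iff_subsingleton.mp hE |>.elim
  have : Nonempty V := Fintype.card_pos_iff.mp (by omega)
  obtain ⟨e, -, -⟩ := hG.mem_VX_univ (by omega) (Classical.arbitrary V)
  obtain ⟨p, q, hpq⟩ := exists_ends_eq G e
  have hcover : (Set.univ : Set V) ⊆ {p, q} := fun v _ => by
    obtain ⟨f, -, hf⟩ := hG.mem_VX_univ (by omega) v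
    rwa [h f e, hpq, Sym2.mem_iff] at hf
  have := (Set.ncard_le_ncard hcover).trans (Set.ncard_insert_le p {q})
  rw [Set.ncard_univ, Nat.card_eq_fintype_card, Set.ncard_singleton] at this
  omega

lemma two_le_deg_of_not_pendentEdge [Finite E] (hG : GConn G) (hV : 1 < Fintype.card V)
    (hp : ¬ PendentEdge G Set.univ) (v : V) : 2 ≤ deg G Set.univ v := by
  have := one_le_deg_iff.mpr (hG.mem_VX_univ hV v)
  by_contra! h
  obtain ⟨e, -, hve, -⟩ := exists_unique_of_deg_eq_one (by omega : deg G Set.univ v = 1)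
  exact hp ⟨e, trivial, v, hve, by omega⟩

end Hypotheses

end Graph

end Bicirc

open Bicirc in
theorem stmt3 {V E : Type*} [Fintype V] [Fintype E] (G : MGraph V E)
    (hG : GConn G) (hV : 3 ≤ Fintype.card V)
    (M : Matroid E) (hM : IsBicircOf G M) :
    MConn M ↔ (¬ IsCycle G Set.univ ∧ ¬ PendentEdge G Set.univ) := by
  have : Nontrivial E := hG.nontrivial_edges hV
  constructor
  · rintro ⟨-, hconn⟩
    have hpair {e f : E} (hef : e ≠ f) : ∃ Z, IsBicycle G Z ∧ e ∈ Z ∧ f ∈ Z := by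
      obtain ⟨C, hC, heC, hfC⟩ := hconn e (hM.1 ▸ trivial) f (hM.1 ▸ trivial) hef
      exact ⟨C, (hM.2 C).mp hC, heC, hfC⟩
    refine ⟨fun hcyc => ?_, fun ⟨p, _, w, hwp, hw⟩ => ?_⟩
    · obtain ⟨e, f, hef⟩ := exists_pair_ne E
      obtain ⟨Z, hZ, -⟩ := hpair hef
      exact hcyc.not_twoCycles (Set.subset_univ Z) hZ.1.2
    · obtain ⟨f, hfp⟩ := exists_ne p
      obtain ⟨Z, hZ, hpZ, -⟩ := hpair hfp.symm
      exact hZ.notMem_of_deg_eq_one hwp hw hpZ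
  · rintro ⟨hcyc, hpend⟩
    have hdeg := two_le_deg_of_not_pendentEdge hG (by omega) hpend
    have hcross (A : Set E) (hA : A.Nonempty) (hA' : (M.E \ A).Nonempty) :
        ∃ C, M.IsCircuit C ∧ (C ∩ A).Nonempty ∧ (C \ A).Nonempty := by
      rw [hM.1, ← Set.compl_eq_univ_sdiff] at hA'
      obtain ⟨Z, hZ, hZA⟩ := exists_isBicycle_crossing hG hdeg hcyc hA hA'
      exact ⟨Z, circ_iff_isCircuit.mp ((hM.2 Z).mpr hZ), hZA⟩
    refine ⟨hM.1 ▸ Set.univ_nonempty, fun e _ f hf hef => ?_⟩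
    obtain ⟨C, hC, heC, hfC⟩ := M.exists_isCircuit_mem_mem_of_forall_crossing hcross hf hef
    exact ⟨C, circ_iff_isCircuit.mpr hC, heC, hfC⟩
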